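/- arXiv:2411.17442 — 5 statements merged into one kernel-verified Lean document; each statement's English description precedes it below -/
import Mathlib

section
/- Fix k ≥ 1, truth values y ∈ {0,1}^3, and configuration basis numbers (k'_s) of weight k' and (k''_s) of weight k'' with k'+k'' = k. Then Σ over all partitions [k] = K' ⊔ K'' with |K'| = k', |K''| = k'' of |Z(y, K', k', K'', k'')| equals (∏_{s∈{0,1}^3} C(k'_s + k''_s, k'_s)) · |Z(y, k'+k'')|, where Z(y, K', k', K'', k'') is the set of triples of k-bit strings whose truth values under a fixed truth table T: {0,1}^k → {0,1} are y, whose restriction to K' satisfies configuration (k'_s), and whose restriction to K'' satisfies configuration (k''_s); and Z(y, k) is the set of triples with truth values y and configuration basis numbers k. -/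
/-- The configuration basis numbers of a triple of `k`-bit strings restricted to a set `K`
of positions: `tripleCfg K w s` counts the positions `j ∈ K` where the joint bit pattern of
the triple `w` equals `s`. -/
def tripleCfg {k : ℕ} (K : Finset (Fin k))
    (w : (Fin k → Bool) × (Fin k → Bool) × (Fin k → Bool)) (s : Bool × Bool × Bool) : ℕ :=
  (K.filter (fun j => (w.1 j, w.2.1 j, w.2.2 j) = s)).card

/-!
Double count the pairs `(K, w)`. For a fixed triple `w`, a set `K` is admissible iff it meets
the class of positions carrying pattern `s` in exactly `cfg' s` elements: then `#K = k'`, and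
`Kᶜ` meets that class in `cfg'' s` elements iff the class has `cfg' s + cfg'' s` elements. So `w`
contributes only if its global configuration is `cfg' + cfg''`, and then `K` is chosen
independently inside each class, in `∏ s, C(cfg' s + cfg'' s, cfg' s)` ways.
-/

open Finset

theorem Finset.filter_biUnion_eq_of_forall_mem {α S : Type*} [DecidableEq α] [Fintype S]
    [DecidableEq S] {f : α → S} {g : S → Finset α} (hg : ∀ s, ∀ j ∈ g s, f j = s) (s : S) :
    {j ∈ univ.biUnion g | f j = s} = g s := by
  ext j
  simp only [mem_filter, mem_biUnion, mem_univ, true_and]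
  exact ⟨fun ⟨⟨s', hj⟩, hs⟩ => (hg s' j hj).symm.trans hs ▸ hj, fun hj => ⟨⟨s, hj⟩, hg s j hj⟩⟩

theorem Finset.card_filter_powerset_card_fiber_eq {α S : Type*} [DecidableEq α] [Fintype S]
    [DecidableEq S] (U : Finset α) (f : α → S) (t : S → ℕ) :
    #{K ∈ U.powerset | ∀ s, #{j ∈ K | f j = s} = t s} =
      ∏ s, (#{j ∈ U | f j = s}).choose (t s) := by
  simp_rw [← card_powersetCard, ← Fintype.card_piFinset]
  refine card_nbij' (fun K s => {j ∈ K | f j = s}) (fun g => univ.biUnion g) ?_ ?_ ?_ ?_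
  · intro K hK
    simp only [coe_filter, mem_powerset, Set.mem_ofPred_eq, Fintype.coe_piFinset, Set.mem_pi,
      Set.mem_univ, mem_coe, mem_powersetCard, forall_const] at hK ⊢
    exact fun s => ⟨filter_subset_filter _ hK.1, hK.2 s⟩
  · intro g hg
    simp only [Fintype.coe_piFinset, Set.mem_pi, Set.mem_univ, mem_coe, mem_powersetCard,
      forall_const, subset_iff, mem_filter] at hg
    simp only [coe_filter, mem_powerset, Set.mem_ofPred_eq,
      filter_biUnion_eq_of_forall_mem fun s j hj => (hg s).1 hj |>.2]
    exact ⟨biUnion_subset.2 fun s _ j hj => ((hg s).1 hj).1, fun s => (hg s).2⟩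
  · intro K _
    exact biUnion_filter_eq_of_maps_to fun _ _ => mem_univ _
  · intro g hg
    simp only [Fintype.coe_piFinset, Set.mem_pi, Set.mem_univ, mem_coe, mem_powersetCard,
      forall_const, subset_iff, mem_filter] at hg
    exact funext <| filter_biUnion_eq_of_forall_mem fun s j hj => (hg s).1 hj |>.2

section

variable {k : ℕ} (K : Finset (Fin k)) (w : (Fin k → Bool) × (Fin k → Bool) × (Fin k → Bool))

theorem tripleCfg_univ_eq_add_compl (s : Bool × Bool × Bool) :
    tripleCfg univ w s = tripleCfg K w s + tripleCfg Kᶜ w s := by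
  rw [tripleCfg, ← union_compl K, filter_union,
    card_union_of_disjoint (disjoint_filter_filter disjoint_compl_right)]
  rfl

theorem sum_tripleCfg_eq_card : ∑ s, tripleCfg K w s = #K :=
  (card_eq_sum_card_fiberwise fun _ _ => mem_univ _).symm

theorem card_filter_powersetCard_tripleCfg {k' : ℕ} {cfg' cfg'' : Bool × Bool × Bool → ℕ}
    (h' : ∑ s, cfg' s = k') :
    #{K ∈ powersetCard k' (univ : Finset (Fin k)) |
        (∀ s, tripleCfg K w s = cfg' s) ∧ (∀ s, tripleCfg Kᶜ w s = cfg'' s)} =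
      if ∀ s, tripleCfg univ w s = cfg' s + cfg'' s then
        ∏ s, (cfg' s + cfg'' s).choose (cfg' s) else 0 := by
  split_ifs with hw
  · have hsplit : {K ∈ powersetCard k' (univ : Finset (Fin k)) |
        (∀ s, tripleCfg K w s = cfg' s) ∧ (∀ s, tripleCfg Kᶜ w s = cfg'' s)} =
        {K ∈ (univ : Finset (Fin k)).powerset | ∀ s, tripleCfg K w s = cfg' s} := by
      ext K
      simp only [mem_filter, mem_powersetCard, mem_powerset, subset_univ, true_and]
      refine ⟨fun h => h.2.1, fun hK => ⟨?_, hK, fun s => ?_⟩⟩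
      · rw [← sum_tripleCfg_eq_card K w, ← h']
        exact sum_congr rfl fun s _ => hK s
      · linarith [tripleCfg_univ_eq_add_compl K w s, hw s, hK s]
    rw [hsplit]
    unfold tripleCfg
    rw [card_filter_powerset_card_fiber_eq]
    exact prod_congr rfl fun s _ => congrArg (Nat.choose · _) (hw s)
  · refine card_eq_zero.2 <| filter_eq_empty_iff.2 fun K _ hK => hw fun s => ?_
    rw [tripleCfg_univ_eq_add_compl K w s, hK.1 s, hK.2 s]

end

theorem fine_coarse_partition_relation_general (k : ℕ)
    (T : (Fin k → Bool) → Bool) (y : Bool × Bool × Bool)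
    (k' : ℕ)
    (cfg' cfg'' : Bool × Bool × Bool → ℕ)
    (h' : ∑ s, cfg' s = k') :
    ∑ K ∈ Finset.powersetCard k' (Finset.univ : Finset (Fin k)),
      ((Finset.univ :
          Finset ((Fin k → Bool) × (Fin k → Bool) × (Fin k → Bool))).filter
        (fun w =>
          (T w.1, T w.2.1, T w.2.2) = y ∧
          (∀ s, tripleCfg K w s = cfg' s) ∧
          (∀ s, tripleCfg Kᶜ w s = cfg'' s))).card
    = (∏ s : Bool × Bool × Bool, Nat.choose (cfg' s + cfg'' s) (cfg' s)) *
        ((Finset.univ :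
            Finset ((Fin k → Bool) × (Fin k → Bool) × (Fin k → Bool))).filter
          (fun w =>
            (T w.1, T w.2.1, T w.2.2) = y ∧
            (∀ s, tripleCfg Finset.univ w s = cfg' s + cfg'' s))).card := by
  calc _ = ∑ w, #((powersetCard k' univ).bipartiteBelow _ w) :=
        sum_card_bipartiteAbove_eq_sum_card_bipartiteBelow _
    _ = ∑ w, if (T w.1, T w.2.1, T w.2.2) = y ∧ ∀ s, tripleCfg univ w s = cfg' s + cfg'' s then
          ∏ s, (cfg' s + cfg'' s).choose (cfg' s) else 0 := sum_congr rfl fun w _ => ?_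
    _ = _ := by rw [← sum_filter, sum_const, smul_eq_mul, mul_comm]
  by_cases hy : (T w.1, T w.2.1, T w.2.2) = y
  · simp only [bipartiteBelow, hy, true_and, card_filter_powersetCard_tripleCfg w h']
  · simp only [bipartiteBelow, hy, false_and, filter_false, card_empty, if_false]

/-- Relating fine and coarse partitionings of bitstring triplets: summing over all
bipartitions `[k] = K' ⊔ K''` with `|K'| = k'`, `|K''| = k''` the number of triples of
`k`-bit strings with truth values `y`, restriction to `K'` of configuration `cfg'` and
restriction to `K''` of configuration `cfg''`, gives
`(∏_s C(cfg'_s + cfg''_s, cfg'_s))` times the number of triples with truth values `y` and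
(global) configuration `cfg' + cfg''`. -/
theorem fine_coarse_partition_relation (k : ℕ) (hk : 1 ≤ k)
    (T : (Fin k → Bool) → Bool) (y : Bool × Bool × Bool)
    (k' k'' : ℕ) (hk'' : k' + k'' = k)
    (cfg' cfg'' : Bool × Bool × Bool → ℕ)
    (h' : ∑ s, cfg' s = k') (h'' : ∑ s, cfg'' s = k'') :
    ∑ K ∈ Finset.powersetCard k' (Finset.univ : Finset (Fin k)),
      ((Finset.univ :
          Finset ((Fin k → Bool) × (Fin k → Bool) × (Fin k → Bool))).filter
        (fun w =>
          (T w.1, T w.2.1, T w.2.2) = y ∧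
          (∀ s, tripleCfg K w s = cfg' s) ∧
          (∀ s, tripleCfg Kᶜ w s = cfg'' s))).card
    = (∏ s : Bool × Bool × Bool, Nat.choose (cfg' s + cfg'' s) (cfg' s)) *
        ((Finset.univ :
            Finset ((Fin k → Bool) × (Fin k → Bool) × (Fin k → Bool))).filter
          (fun w =>
            (T w.1, T w.2.1, T w.2.2) = y ∧
            (∀ s, tripleCfg Finset.univ w s = cfg' s + cfg'' s))).card :=
  fine_coarse_partition_relation_general k T y k' cfg' cfg'' h'
end

section
/- For NAE-SAT with clauses of k distinct variables chosen uniformly without replacement from n variables and uniform independent negations, and two fixed n-bit strings z^1, z^0 with n_{ab} denoting the number of positions j with (z^1_j, z^0_j) = (a,b), the probability that both z^1 and z^0 violate a random clause equals [C(n_{00}+n_{11}, k) + C(n_{01}+n_{10}, k)] / C(n, k) · 2/2^k. -/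
/-- A bitstring `z` violates a NAE-SAT clause with scope `L` and negations `ν` iff all
bits `z_j ⊕ ν_j`, `j ∈ L`, are equal. -/
def naeViolates {n : ℕ} (z : Fin n → Bool) (L : Finset (Fin n)) (ν : Fin n → Bool) : Prop :=
  (∀ j ∈ L, xor (z j) (ν j) = true) ∨ (∀ j ∈ L, xor (z j) (ν j) = false)

instance {n : ℕ} (z : Fin n → Bool) (L : Finset (Fin n)) (ν : Fin n → Bool) :
    Decidable (naeViolates z L ν) := by unfold naeViolates; infer_instance

lemma nae_iff {n : ℕ} (z : Fin n → Bool) (L : Finset (Fin n)) (ν : Fin n → Bool) :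
    naeViolates z L ν ↔ (∀ j ∈ L, ν j = !z j) ∨ (∀ j ∈ L, ν j = z j) := by
  unfold naeViolates
  refine or_congr (forall₂_congr fun j _ => ?_) (forall₂_congr fun j _ => ?_) <;>
    cases z j <;> cases ν j <;> simp

lemma count_nu (n : ℕ) (L : Finset (Fin n)) (f : Fin n → Bool) :
    (Finset.univ.filter (fun ν : Fin n → Bool => ∀ j ∈ L, ν j = f j)).card
      = 2 ^ (n - L.card) := by
  classical
  have hset : Finset.univ.filter (fun ν : Fin n → Bool => ∀ j ∈ L, ν j = f j)
      = Fintype.piFinset (fun j => if j ∈ L then ({f j} : Finset Bool) else Finset.univ) := by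
    ext ν
    simp only [Finset.mem_filter, Finset.mem_univ, true_and, Fintype.mem_piFinset]
    constructor
    · intro h j; by_cases hj : j ∈ L <;> simp [hj, h j]
    · intro h j hj; have := h j; simpa [hj] using this
  rw [hset, Fintype.card_piFinset]
  have h1 : ∀ j : Fin n, (if j ∈ L then ({f j} : Finset Bool) else Finset.univ).card
      = if j ∈ L then 1 else 2 := by
    intro j; split_ifs <;> simp
  rw [Finset.prod_congr rfl (fun j _ => h1 j), Finset.prod_ite]
  simp only [Finset.prod_const, one_pow, one_mul]
  congr 1
  rw [Finset.filter_not, Finset.card_sdiff_of_subset (Finset.filter_subset _ _)]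
  simp [Finset.filter_univ_mem]

lemma card_nu_eq (n : ℕ) (z1 z0 : Fin n → Bool) (L : Finset (Fin n)) (hL : L.Nonempty) :
    (Finset.univ.filter
        (fun ν : Fin n → Bool => naeViolates z1 L ν ∧ naeViolates z0 L ν)).card
      = if (∀ j ∈ L, z1 j = z0 j) ∨ (∀ j ∈ L, z1 j ≠ z0 j)
          then 2 ^ (n - L.card) * 2 else 0 := by
  classical
  split_ifs with h
  · have hset : Finset.univ.filter
        (fun ν : Fin n → Bool => naeViolates z1 L ν ∧ naeViolates z0 L ν)
        = (Finset.univ.filter fun ν : Fin n → Bool => ∀ j ∈ L, ν j = !z1 j)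
          ∪ (Finset.univ.filter fun ν : Fin n → Bool => ∀ j ∈ L, ν j = z1 j) := by
      ext ν
      simp only [Finset.mem_filter, Finset.mem_univ, true_and, Finset.mem_union,
        nae_iff]
      constructor
      · rintro ⟨h1, -⟩; exact h1
      · intro h1
        refine ⟨h1, ?_⟩
        rcases h with hEq | hNe
        · rcases h1 with ha | hb
          · left; intro j hj; rw [ha j hj, hEq j hj]
          · right; intro j hj; rw [hb j hj, hEq j hj]
        · rcases h1 with ha | hb
          · right; intro j hj
            have := hNe j hj
            rw [ha j hj]
            revert this; cases z1 j <;> cases z0 j <;> simp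
          · left; intro j hj
            have := hNe j hj
            rw [hb j hj]
            revert this; cases z1 j <;> cases z0 j <;> simp
    rw [hset, Finset.card_union_of_disjoint, count_nu, count_nu]
    · ring
    · obtain ⟨j, hj⟩ := hL
      rw [Finset.disjoint_left]
      intro ν hν hν'
      simp only [Finset.mem_filter, Finset.mem_univ, true_and] at hν hν'
      have h1 := hν j hj
      have h2 := hν' j hj
      rw [h1] at h2
      exact (Bool.not_ne_self _ h2).elim
  · rw [Finset.card_eq_zero, Finset.filter_eq_empty_iff]
    push_neg at h
    obtain ⟨⟨j, hj, hjne⟩, ⟨i, hi, hieq⟩⟩ := h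
    intro ν _
    rintro ⟨hv1, hv0⟩
    rw [nae_iff] at hv1 hv0
    rcases hv1 with h1 | h1 <;> rcases hv0 with h0 | h0
    · have a := h1 j hj; have b := h0 j hj
      rw [a] at b
      exact hjne (by revert b; cases z1 j <;> cases z0 j <;> simp)
    · have a := h1 i hi; have b := h0 i hi
      rw [a, hieq] at b
      revert b; cases z0 i <;> simp
    · have a := h1 i hi; have b := h0 i hi
      rw [a, hieq] at b
      revert b; cases z0 i <;> simp
    · have a := h1 j hj; have b := h0 j hj
      rw [a] at b
      exact hjne b

lemma total_count (n k : ℕ) (hk : 1 ≤ k) (z1 z0 : Fin n → Bool) :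
    ((((Finset.powersetCard k (Finset.univ : Finset (Fin n))) ×ˢ
          (Finset.univ : Finset (Fin n → Bool))).filter
        (fun p => naeViolates z1 p.1 p.2 ∧ naeViolates z0 p.1 p.2)).card)
      = (Nat.choose (Finset.univ.filter fun j : Fin n => z1 j = z0 j).card k
          + Nat.choose (Finset.univ.filter fun j : Fin n => ¬ z1 j = z0 j).card k)
        * (2 ^ (n - k) * 2) := by
  classical
  rw [Finset.card_filter, Finset.sum_product]
  have step : ∀ L ∈ Finset.powersetCard k (Finset.univ : Finset (Fin n)),
      (∑ ν : Fin n → Bool,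
        if naeViolates z1 L ν ∧ naeViolates z0 L ν then 1 else 0)
      = if (∀ j ∈ L, z1 j = z0 j) ∨ (∀ j ∈ L, z1 j ≠ z0 j)
          then 2 ^ (n - k) * 2 else 0 := by
    intro L hL
    rw [Finset.mem_powersetCard] at hL
    have hne : L.Nonempty := by
      rw [← Finset.card_pos, hL.2]; omega
    rw [← Finset.card_filter, card_nu_eq n z1 z0 L hne, hL.2]
  rw [Finset.sum_congr rfl step, Finset.sum_ite, Finset.sum_const, Finset.sum_const_zero,
    add_zero, smul_eq_mul]
  congr 1
  have hfe : (Finset.powersetCard k (Finset.univ : Finset (Fin n))).filter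
      (fun L => (∀ j ∈ L, z1 j = z0 j) ∨ (∀ j ∈ L, z1 j ≠ z0 j))
      = Finset.powersetCard k (Finset.univ.filter fun j : Fin n => z1 j = z0 j)
        ∪ Finset.powersetCard k (Finset.univ.filter fun j : Fin n => ¬ z1 j = z0 j) := by
    ext L
    simp only [Finset.mem_filter, Finset.mem_powersetCard, Finset.mem_union,
      Finset.subset_iff, Finset.mem_univ, true_and, Finset.mem_filter]
    tauto
  rw [hfe, Finset.card_union_of_disjoint, Finset.card_powersetCard,
    Finset.card_powersetCard]
  rw [Finset.disjoint_left]
  intro L hE hD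
  rw [Finset.mem_powersetCard] at hE hD
  have hne : L.Nonempty := by rw [← Finset.card_pos, hE.2]; omega
  obtain ⟨j, hj⟩ := hne
  have h1 := hE.1 hj
  have h2 := hD.1 hj
  simp only [Finset.mem_filter] at h1 h2
  exact h2.2 h1.2

/-- For two fixed `n`-bit strings `z¹, z⁰`, with `n_{ab}` counting positions where
`(z¹_j, z⁰_j) = (a,b)`, the probability over a random NAE-SAT clause (scope of `k` distinct
variables, uniform negations) that both strings violate the clause is
`(C(n₀₀+n₁₁,k) + C(n₀₁+n₁₀,k)) / C(n,k) · 2/2^k`. -/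
theorem nae_sat_two_string_violation_probability (n k : ℕ) (hk : 1 ≤ k) (hkn : k ≤ n)
    (z1 z0 : Fin n → Bool)
    (ncfg : Bool × Bool → ℕ)
    (hcfg : ∀ a b : Bool,
      ncfg (a, b) = (Finset.univ.filter (fun j : Fin n => (z1 j, z0 j) = (a, b))).card) :
    (((((Finset.powersetCard k (Finset.univ : Finset (Fin n))) ×ˢ
          (Finset.univ : Finset (Fin n → Bool))).filter
        (fun p => naeViolates z1 p.1 p.2 ∧ naeViolates z0 p.1 p.2)).card : ℚ))
      / ((Nat.choose n k : ℚ) * 2 ^ n)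
    = (((Nat.choose (ncfg (false, false) + ncfg (true, true)) k : ℚ) +
          (Nat.choose (ncfg (false, true) + ncfg (true, false)) k : ℚ)) /
        (Nat.choose n k : ℚ)) * (2 / 2 ^ k) := by
  classical
  have hEcard : (Finset.univ.filter fun j : Fin n => z1 j = z0 j).card
      = ncfg (false, false) + ncfg (true, true) := by
    rw [hcfg, hcfg]
    rw [← Finset.card_union_of_disjoint]
    · congr 1
      ext j
      simp only [Finset.mem_filter, Finset.mem_univ, true_and, Finset.mem_union,
        Prod.mk.injEq]
      cases h1 : z1 j <;> cases h0 : z0 j <;> simp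
    · rw [Finset.disjoint_left]
      intro j h1 h2
      simp only [Finset.mem_filter, Prod.mk.injEq] at h1 h2
      rw [h1.2.1] at h2
      exact absurd h2.2.1 (by simp)
  have hDcard : (Finset.univ.filter fun j : Fin n => ¬ z1 j = z0 j).card
      = ncfg (false, true) + ncfg (true, false) := by
    rw [hcfg, hcfg]
    rw [← Finset.card_union_of_disjoint]
    · congr 1
      ext j
      simp only [Finset.mem_filter, Finset.mem_univ, true_and, Finset.mem_union,
        Prod.mk.injEq]
      cases h1 : z1 j <;> cases h0 : z0 j <;> simp
    · rw [Finset.disjoint_left]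
      intro j h1 h2
      simp only [Finset.mem_filter, Prod.mk.injEq] at h1 h2
      rw [h1.2.1] at h2
      exact absurd h2.2.1 (by simp)
  rw [total_count n k hk z1 z0, hEcard, hDcard]
  have hchoose : (Nat.choose n k : ℚ) ≠ 0 := by
    exact_mod_cast Nat.choose_pos hkn |>.ne'
  have hpow : (2 : ℚ) ^ (n - k) * 2 ^ k = 2 ^ n := by
    rw [← pow_add, Nat.sub_add_cancel hkn]
  have h2n : (2 : ℚ) ^ n ≠ 0 := by positivity
  have h2k : (2 : ℚ) ^ k ≠ 0 := by positivity
  push_cast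
  field_simp
  ring_nf
  rw [← hpow]
  ring
end

section
/- For 1-in-k SAT with clauses on k distinct variables chosen uniformly without replacement from n variables with uniform independent negations, and two fixed n-bit strings z^1, z^0 with n_{ab} counting positions j where (z^1_j, z^0_j) = (a,b), the probability that both strings satisfy a random clause equals (1/2^k)·(1/C(n,k))·[k·C(n_{00}+n_{11}, k) + 2·C(n_{00}+n_{11}, k−2)·C(n_{01}+n_{10}, 2)]. -/
/-- A bitstring `z` satisfies a 1-in-k SAT clause with scope `L` and negations `ν` iff
exactly one of the bits `z_j ⊕ ν_j`, `j ∈ L`, is true. -/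
def oneInKSatisfies {n : ℕ} (z : Fin n → Bool) (L : Finset (Fin n)) (ν : Fin n → Bool) :
    Prop :=
  (L.filter (fun j => xor (z j) (ν j) = true)).card = 1

instance {n : ℕ} (z : Fin n → Bool) (L : Finset (Fin n)) (ν : Fin n → Bool) :
    Decidable (oneInKSatisfies z L ν) := by unfold oneInKSatisfies; infer_instance

/-! Fix a scope `L` of size `k`. Both strings satisfy `(L, ν)` iff, for some `j ∈ L`, `ν`
agrees on `L` with the pattern `oneHotNegation z₁ j` that makes literal `j` the only true one for
`z₁`, and that pattern leaves exactly one true literal for `z₀`. If `S ⊆ L` is where `z₁` and `z₀`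
differ, those literals form `S ∆ {j}`, so `j` qualifies iff `S = ∅` (`k` choices) or `#S = 2` and
`j ∈ S` (two choices). Each choice fixes `ν` on `L` and leaves `2^(n-k)` completions; counting
the `k`-sets meeting the disagreement set in `0` or `2` points gives the numerator
`(k C(n₀₀+n₁₁, k) + 2 C(n₀₀+n₁₁, k-2) C(n₀₁+n₁₀, 2)) 2^(n-k)`.
-/

open Finset

namespace Finset

theorem card_filter_product {α β : Type*} (s : Finset α) (t : Finset β) (p : α → β → Prop)
    [∀ a b, Decidable (p a b)] :
    #{x ∈ s ×ˢ t | p x.1 x.2} = ∑ a ∈ s, #{b ∈ t | p a b} := by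
  simp only [card_filter, sum_product]

-- The decidability instance is a parameter because over `Fin n` the filter elaborates with
-- `Nat.decidableForallFin` rather than the generic instance.
theorem card_filter_forall_mem_eq {α β : Type*} [Fintype α] [DecidableEq α] [Fintype β]
    (L : Finset α) (g : α → β) [DecidablePred fun ν : α → β => ∀ i ∈ L, ν i = g i] :
    #{ν : α → β | ∀ i ∈ L, ν i = g i} = Fintype.card β ^ (Fintype.card α - #L) := by
  have hpi : ({ν : α → β | ∀ i ∈ L, ν i = g i} : Finset _) =
      Fintype.piFinset fun i => if i ∈ L then {g i} else univ := by
    ext ν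
    simp only [mem_filter, mem_univ, true_and, Fintype.mem_piFinset]
    refine forall_congr' fun i => ?_
    split_ifs with hi <;> simp [hi]
  rw [hpi, Fintype.card_piFinset]
  simp [apply_ite, prod_ite, ← card_compl, compl_eq_univ_sdiff, filter_not]

theorem card_filter_powersetCard_card_filter_eq {α : Type*} [DecidableEq α] (s : Finset α)
    (p : α → Prop) [DecidablePred p] {i k : ℕ} (hik : i ≤ k) :
    #{L ∈ powersetCard k s | #{x ∈ L | p x} = i} =
      (#{x ∈ s | p x}).choose i * (#{x ∈ s | ¬ p x}).choose (k - i) := by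
  have filter_union_of_sep {A B : Finset α} (hA : A ⊆ {x ∈ s | p x})
      (hB : B ⊆ {x ∈ s | ¬ p x}) : {x ∈ A ∪ B | p x} = A ∧ {x ∈ A ∪ B | ¬ p x} = B := by
    have hAp x (hx : x ∈ A) : p x := (mem_filter.1 (hA hx)).2
    have hBp x (hx : x ∈ B) : ¬ p x := (mem_filter.1 (hB hx)).2
    simp only [filter_union, filter_true_of_mem hAp, filter_false_of_mem hBp,
      filter_true_of_mem hBp, filter_false_of_mem (fun x hx => not_not.2 (hAp x hx)),
      union_empty, empty_union, and_self]
  rw [← card_powersetCard, ← card_powersetCard, ← card_product]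
  refine card_nbij' (fun L => ({x ∈ L | p x}, {x ∈ L | ¬ p x})) (fun AB => AB.1 ∪ AB.2)
    ?_ ?_ (fun L _ => filter_union_filter_not_eq p L) ?_
  · intro L hL
    simp only [coe_filter, mem_powersetCard, Set.mem_ofPred_eq] at hL
    obtain ⟨⟨hLs, hLk⟩, hLi⟩ := hL
    have hsplit := card_filter_add_card_filter_not (s := L) (fun x => p x)
    simp only [coe_product, Set.mem_prod, mem_coe, mem_powersetCard]
    exact ⟨⟨filter_subset_filter _ hLs, hLi⟩, filter_subset_filter _ hLs, by omega⟩
  · rintro ⟨A, B⟩ hAB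
    simp only [coe_product, Set.mem_prod, mem_coe, mem_powersetCard] at hAB
    obtain ⟨⟨hA, hAi⟩, hB, hBk⟩ := hAB
    have hdisj : Disjoint A B := disjoint_filter_filter_not s s p |>.mono hA hB
    simp only [coe_filter, mem_powersetCard, Set.mem_ofPred_eq,
      (filter_union_of_sep hA hB).1, hAi, and_true]
    refine ⟨union_subset (hA.trans (filter_subset _ _)) (hB.trans (filter_subset _ _)), ?_⟩
    rw [card_union_of_disjoint hdisj]
    omega
  · rintro ⟨A, B⟩ hAB
    simp only [coe_product, Set.mem_prod, mem_coe, mem_powersetCard] at hAB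
    obtain ⟨h₁, h₂⟩ := filter_union_of_sep hAB.1.1 hAB.2.1
    exact Prod.ext h₁ h₂

theorem card_filter_eq_eq_add {α : Type*} [Fintype α] (z₁ z₀ : α → Bool) :
    #{j | z₁ j = z₀ j} =
      #{j | (z₁ j, z₀ j) = (false, false)} + #{j | (z₁ j, z₀ j) = (true, true)} := by
  classical
  rw [← card_union_of_disjoint (disjoint_filter.2 fun j _ h h' => by simp_all), ← filter_or]
  congr 1
  ext j
  simp only [mem_filter, mem_univ, true_and, Prod.mk.injEq]
  cases z₁ j <;> cases z₀ j <;> simp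

theorem card_filter_ne_eq_add {α : Type*} [Fintype α] (z₁ z₀ : α → Bool) :
    #{j | z₁ j ≠ z₀ j} =
      #{j | (z₁ j, z₀ j) = (false, true)} + #{j | (z₁ j, z₀ j) = (true, false)} := by
  classical
  rw [← card_union_of_disjoint (disjoint_filter.2 fun j _ h h' => by simp_all), ← filter_or]
  congr 1
  ext j
  simp only [mem_filter, mem_univ, true_and, Prod.mk.injEq]
  cases z₁ j <;> cases z₀ j <;> simp

end Finset

section OneInK

variable {n : ℕ}

def oneHotNegation (z : Fin n → Bool) (j : Fin n) : Fin n → Bool :=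
  fun i => xor (z i) (decide (i = j))

theorem oneInKSatisfies_congr {z ν ν' : Fin n → Bool} {L : Finset (Fin n)}
    (h : ∀ i ∈ L, ν i = ν' i) : oneInKSatisfies z L ν ↔ oneInKSatisfies z L ν' := by
  unfold oneInKSatisfies
  rw [filter_congr fun i hi => by rw [h i hi]]

theorem filter_xor_oneHotNegation {z : Fin n → Bool} {L : Finset (Fin n)} {j : Fin n}
    (hj : j ∈ L) : {i ∈ L | xor (z i) (oneHotNegation z j i) = true} = {j} := by
  ext i
  by_cases hij : i = j
  · simp [oneHotNegation, hij, hj]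
  · simp [oneHotNegation, hij]

theorem oneInKSatisfies_iff_exists {z ν : Fin n → Bool} {L : Finset (Fin n)} :
    oneInKSatisfies z L ν ↔ ∃ j ∈ L, ∀ i ∈ L, ν i = oneHotNegation z j i := by
  constructor
  · intro h
    obtain ⟨j, hj⟩ := card_eq_one.1 h
    have hmem i : i ∈ L ∧ xor (z i) (ν i) = true ↔ i = j := by
      simpa using Finset.ext_iff.1 hj i
    refine ⟨j, ((hmem j).2 rfl).1, fun i hi => ?_⟩
    have hx : xor (z i) (ν i) = decide (i = j) := by
      rw [Bool.eq_iff_iff, decide_eq_true_iff, ← hmem i, and_iff_right hi]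
    rw [oneHotNegation, ← hx, ← Bool.xor_assoc, Bool.xor_self, Bool.false_xor]
  · rintro ⟨j, hj, hν⟩
    rw [oneInKSatisfies_congr hν, oneInKSatisfies, filter_xor_oneHotNegation hj, card_singleton]

theorem eq_of_agree_oneHotNegation {z ν : Fin n → Bool} {L : Finset (Fin n)} {j j' : Fin n}
    (hj : j ∈ L) (h : ∀ i ∈ L, ν i = oneHotNegation z j i)
    (h' : ∀ i ∈ L, ν i = oneHotNegation z j' i) : j = j' := by
  have hxor := (h j hj).symm.trans (h' j hj)
  simp only [oneHotNegation, decide_true] at hxor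
  exact of_decide_eq_true (Bool.xor_right_inj.1 hxor).symm

theorem oneInKSatisfies_oneHotNegation_iff {z₁ z₀ : Fin n → Bool} {L : Finset (Fin n)}
    {j : Fin n} (hj : j ∈ L) :
    oneInKSatisfies z₀ L (oneHotNegation z₁ j) ↔
      #{i ∈ L | z₁ i ≠ z₀ i} = 0 ∨ (z₁ j ≠ z₀ j ∧ #{i ∈ L | z₁ i ≠ z₀ i} = 2) := by
  set S := {i ∈ L | z₁ i ≠ z₀ i}
  have hxor i :
      xor (z₀ i) (oneHotNegation z₁ j i) = xor (decide (z₁ i ≠ z₀ i)) (decide (i = j)) := by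
    unfold oneHotNegation
    cases z₀ i <;> cases z₁ i <;> simp
  unfold oneInKSatisfies
  simp only [hxor]
  by_cases hjS : z₁ j ≠ z₀ j
  · have hfilter :
        {i ∈ L | xor (decide (z₁ i ≠ z₀ i)) (decide (i = j)) = true} = S.erase j := by
      ext i; by_cases hij : i = j <;> simp [S, hij, hjS]
    have hjS' : j ∈ S := mem_filter.2 ⟨hj, hjS⟩
    have hSpos := card_pos.2 ⟨j, hjS'⟩
    rw [hfilter, card_erase_of_mem hjS']
    simp only [hjS, ne_eq, not_false_eq_true, true_and]
    omega
  · have hfilter :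
        {i ∈ L | xor (decide (z₁ i ≠ z₀ i)) (decide (i = j)) = true} = insert j S := by
      ext i; by_cases hij : i = j <;> simp_all [S]
    rw [hfilter, card_insert_of_notMem (by simp [S, hjS])]
    simp [hjS]

theorem card_filter_oneInKSatisfies_oneHotNegation (z₁ z₀ : Fin n → Bool)
    (L : Finset (Fin n)) :
    #{j ∈ L | oneInKSatisfies z₀ L (oneHotNegation z₁ j)} =
      (if #{i ∈ L | z₁ i ≠ z₀ i} = 0 then #L else 0) +
        (if #{i ∈ L | z₁ i ≠ z₀ i} = 2 then 2 else 0) := by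
  rw [filter_congr fun j hj => oneInKSatisfies_oneHotNegation_iff hj]
  by_cases h0 : #{i ∈ L | z₁ i ≠ z₀ i} = 0
  · simp [h0]
  · by_cases h2 : #{i ∈ L | z₁ i ≠ z₀ i} = 2 <;> simp [h0, h2]

theorem card_filter_oneInKSatisfies_and (z₁ z₀ : Fin n → Bool) (L : Finset (Fin n)) :
    #{ν | oneInKSatisfies z₁ L ν ∧ oneInKSatisfies z₀ L ν} =
      #{j ∈ L | oneInKSatisfies z₀ L (oneHotNegation z₁ j)} * 2 ^ (n - #L) := by
  have hunion : ({ν | oneInKSatisfies z₁ L ν ∧ oneInKSatisfies z₀ L ν} : Finset _) =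
      {j ∈ L | oneInKSatisfies z₀ L (oneHotNegation z₁ j)}.biUnion
        fun j => {ν | ∀ i ∈ L, ν i = oneHotNegation z₁ j i} := by
    ext ν
    simp only [mem_filter, mem_univ, true_and, mem_biUnion,
      oneInKSatisfies_iff_exists (z := z₁)]
    constructor
    · rintro ⟨⟨j, hj, hν⟩, h₀⟩
      exact ⟨j, ⟨hj, (oneInKSatisfies_congr hν).1 h₀⟩, hν⟩
    · rintro ⟨j, ⟨hj, h₀⟩, hν⟩
      exact ⟨⟨j, hj, hν⟩, (oneInKSatisfies_congr hν).2 h₀⟩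
  rw [hunion, card_biUnion]
  · rw [sum_const_nat fun j _ => card_filter_forall_mem_eq L (oneHotNegation z₁ j),
      Fintype.card_bool, Fintype.card_fin]
  intro j hj j' _ hne
  refine disjoint_left.2 fun ν hν hν' => hne ?_
  simp only [coe_filter, Set.mem_ofPred_eq, mem_filter, mem_univ, true_and] at hj hν hν'
  exact eq_of_agree_oneHotNegation hj.1 hν hν'

theorem card_filter_powersetCard_product_oneInKSatisfies_and (z₁ z₀ : Fin n → Bool) {k : ℕ}
    (hk : 2 ≤ k) :
    #{p ∈ powersetCard k univ ×ˢ univ |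
        oneInKSatisfies z₁ p.1 p.2 ∧ oneInKSatisfies z₀ p.1 p.2} =
      (k * (#{i | z₁ i = z₀ i}).choose k +
        2 * (#{i | z₁ i = z₀ i}).choose (k - 2) * (#{i | z₁ i ≠ z₀ i}).choose 2) *
          2 ^ (n - k) := by
  rw [card_filter_product (p := fun L ν => oneInKSatisfies z₁ L ν ∧ oneInKSatisfies z₀ L ν)]
  have hscope L (hL : L ∈ powersetCard k univ) :
      #{ν | oneInKSatisfies z₁ L ν ∧ oneInKSatisfies z₀ L ν} =
        ((if #{i ∈ L | z₁ i ≠ z₀ i} = 0 then k else 0) +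
          (if #{i ∈ L | z₁ i ≠ z₀ i} = 2 then 2 else 0)) * 2 ^ (n - k) := by
    rw [card_filter_oneInKSatisfies_and, card_filter_oneInKSatisfies_oneHotNegation,
      (mem_powersetCard.1 hL).2]
  have hA :=
    card_filter_powersetCard_card_filter_eq univ (fun i => z₁ i ≠ z₀ i) (Nat.zero_le k)
  have hD := card_filter_powersetCard_card_filter_eq univ (fun i => z₁ i ≠ z₀ i) hk
  simp only [not_not, Nat.choose_zero_right, one_mul, Nat.sub_zero] at hA hD
  rw [sum_congr rfl hscope, ← sum_mul, sum_add_distrib]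
  simp only [sum_ite, sum_const, smul_eq_mul, mul_zero, add_zero, hA, hD]
  ring

end OneInK

/-- For two fixed `n`-bit strings `z¹, z⁰`, with `n_{ab}` counting positions where
`(z¹_j, z⁰_j) = (a,b)`, the probability over a random 1-in-k SAT clause (scope of `k`
distinct variables, uniform negations) that both strings satisfy the clause is
`(1/2^k)(1/C(n,k))·[k·C(n₀₀+n₁₁,k) + 2·C(n₀₀+n₁₁,k−2)·C(n₀₁+n₁₀,2)]`. -/
theorem one_in_k_sat_two_string_satisfaction_probability (n k : ℕ) (hk : 2 ≤ k)
    (hkn : k ≤ n) (z1 z0 : Fin n → Bool)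
    (ncfg : Bool × Bool → ℕ)
    (hcfg : ∀ a b : Bool,
      ncfg (a, b) = (Finset.univ.filter (fun j : Fin n => (z1 j, z0 j) = (a, b))).card) :
    (((((Finset.powersetCard k (Finset.univ : Finset (Fin n))) ×ˢ
          (Finset.univ : Finset (Fin n → Bool))).filter
        (fun p => oneInKSatisfies z1 p.1 p.2 ∧ oneInKSatisfies z0 p.1 p.2)).card : ℚ))
      / ((Nat.choose n k : ℚ) * 2 ^ n)
    = (1 / 2 ^ k) * (1 / (Nat.choose n k : ℚ)) *
        ((k : ℚ) * (Nat.choose (ncfg (false, false) + ncfg (true, true)) k : ℚ) +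
          2 * (Nat.choose (ncfg (false, false) + ncfg (true, true)) (k - 2) : ℚ) *
            (Nat.choose (ncfg (false, true) + ncfg (true, false)) 2 : ℚ)) := by
  have hchoose : (n.choose k : ℚ) ≠ 0 := by exact_mod_cast (Nat.choose_pos hkn).ne'
  have hpow : (2 : ℚ) ^ n = 2 ^ (n - k) * 2 ^ k := by rw [← pow_add, Nat.sub_add_cancel hkn]
  simp only [hcfg, ← card_filter_eq_eq_add, ← card_filter_ne_eq_add]
  rw [card_filter_powersetCard_product_oneInKSatisfies_and z1 z0 hk, hpow]
  push_cast
  field_simp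
end

section
/- For 1-in-k SAT with clauses on k distinct variables chosen without replacement from n variables and uniform negations, and three fixed n-bit strings with configuration basis numbers (n_s)_{s∈{0,1}^3}, writing a = n_{000}+n_{111}, b = n_{001}+n_{110}, c = n_{010}+n_{101}, d = n_{011}+n_{100}, the probability that all three strings simultaneously satisfy a random clause equals (1/(2^k C(n,k)))·[k·C(a,k) + 2·C(a,k−2)·(C(b,2)+C(c,2)+C(d,2)) + b·c·d·C(a,k−3)]. -/
namespace OIK

lemma card_agree {n : ℕ} (L : Finset (Fin n)) (μ : Fin n → Bool) :
    (Finset.univ.filter (fun ν : Fin n → Bool => ∀ j ∈ L, ν j = μ j)).card = 2 ^ (n - L.card) := by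
  classical
  rw [← Fintype.card_subtype]
  have e : {ν : Fin n → Bool // ∀ j ∈ L, ν j = μ j} ≃ ({j : Fin n // j ∉ L} → Bool) :=
  { toFun := fun ν j => ν.1 j.1
    invFun := fun g => ⟨fun j => if h : j ∈ L then μ j else g ⟨j, h⟩, fun j hj => dif_pos hj⟩
    left_inv := by
      intro ν; ext j; by_cases h : j ∈ L
      · simp [h, ν.2 j h]
      · simp [h]
    right_inv := by intro g; ext j; simp [j.2] }
  rw [Fintype.card_congr e, Fintype.card_fun, Fintype.card_subtype_compl, Fintype.card_coe]
  simp

lemma two_mul_choose_two (m : ℕ) : 2 * m.choose 2 = m * (m - 1) := by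
  rw [Nat.choose_two_right, Nat.mul_div_cancel']
  rcases Nat.even_or_odd m with h | h
  · exact Dvd.dvd.mul_right h.two_dvd _
  · cases m with
    | zero => simp
    | succ m =>
      have : Even m := by
        rcases Nat.even_or_odd m with h2 | h2
        · exact h2
        · exact absurd (h2.add_one) (by simpa using h)
      simpa using this.two_dvd.mul_left (m+1)

lemma uniq {n : ℕ} {z : Fin n → Bool} {L : Finset (Fin n)} {μ : Fin n → Bool}
    (h : oneInKSatisfies z L μ) {j j' : Fin n} (hj : j ∈ L) (hj' : j' ∈ L)
    (e : xor (z j) (μ j) = true) (e' : xor (z j') (μ j') = true) : j = j' :=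
  Finset.card_le_one.mp (le_of_eq h) j (Finset.mem_filter.mpr ⟨hj, e⟩)
    j' (Finset.mem_filter.mpr ⟨hj', e'⟩)

noncomputable def wtn {n : ℕ} (z : Fin n → Bool) (L : Finset (Fin n)) (μ : Fin n → Bool)
    (h : oneInKSatisfies z L μ) : Fin n :=
  (L.filter fun j => xor (z j) (μ j) = true).min'
    (Finset.card_pos.mp (by rw [h]; norm_num))

lemma wtn_mem {n : ℕ} (z : Fin n → Bool) (L : Finset (Fin n)) (μ : Fin n → Bool)
    (h : oneInKSatisfies z L μ) :
    wtn z L μ h ∈ L ∧ xor (z (wtn z L μ h)) (μ (wtn z L μ h)) = true :=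
  Finset.mem_filter.mp (Finset.min'_mem _ _)

lemma wtn_spec {n : ℕ} (z : Fin n → Bool) (L : Finset (Fin n)) (μ : Fin n → Bool)
    (h : oneInKSatisfies z L μ) {j : Fin n} (hj : j ∈ L)
    (e : xor (z j) (μ j) = true) : j = wtn z L μ h :=
  uniq h hj (wtn_mem z L μ h).1 e (wtn_mem z L μ h).2

lemma xor_true_iff (x y : Bool) : xor x y = true ↔ y = !x := by revert x y; decide
lemma xor_false_iff (x y : Bool) : ¬ (xor x y = true) ↔ y = x := by revert x y; decide

section Main
variable {n : ℕ} (z1 z0 zm1 : Fin n → Bool)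

def good (p : Finset (Fin n) × (Fin n → Bool)) : Prop :=
  oneInKSatisfies z1 p.1 p.2 ∧ oneInKSatisfies z0 p.1 p.2 ∧ oneInKSatisfies zm1 p.1 p.2

instance (p : Finset (Fin n) × (Fin n → Bool)) : Decidable (good z1 z0 zm1 p) := by
  unfold good; infer_instance

lemma good_congr (L : Finset (Fin n)) (ν ν' : Fin n → Bool) (h : ∀ j ∈ L, ν j = ν' j) :
    good z1 z0 zm1 (L, ν) ↔ good z1 z0 zm1 (L, ν') := by
  have e : ∀ z : Fin n → Bool, oneInKSatisfies z L ν ↔ oneInKSatisfies z L ν' := by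
    intro z; unfold oneInKSatisfies
    rw [Finset.filter_congr (fun x hx => by rw [h x hx])]
  unfold good; rw [e z1, e z0, e zm1]

def clA : Finset (Fin n) := Finset.univ.filter fun j => z0 j = z1 j ∧ zm1 j = z1 j
def clB : Finset (Fin n) := Finset.univ.filter fun j => z0 j = z1 j ∧ ¬ (zm1 j = z1 j)
def clC : Finset (Fin n) := Finset.univ.filter fun j => ¬ (z0 j = z1 j) ∧ zm1 j = z1 j
def clD : Finset (Fin n) := Finset.univ.filter fun j => ¬ (z0 j = z1 j) ∧ ¬ (zm1 j = z1 j)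

lemma mem_clA {j : Fin n} : j ∈ clA z1 z0 zm1 ↔ (z0 j = z1 j ∧ zm1 j = z1 j) := by
  simp [clA]
lemma mem_clB {j : Fin n} : j ∈ clB z1 z0 zm1 ↔ (z0 j = z1 j ∧ ¬ (zm1 j = z1 j)) := by
  simp [clB]
lemma mem_clC {j : Fin n} : j ∈ clC z1 z0 zm1 ↔ (¬ (z0 j = z1 j) ∧ zm1 j = z1 j) := by
  simp [clC]
lemma mem_clD {j : Fin n} : j ∈ clD z1 z0 zm1 ↔ (¬ (z0 j = z1 j) ∧ ¬ (zm1 j = z1 j)) := by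
  simp [clD]


def S0 (k : ℕ) : Finset (Finset (Fin n) × (Fin n → Bool)) :=
  (Finset.powersetCard k (Finset.univ : Finset (Fin n)) ×ˢ
    (Finset.univ : Finset (Fin n → Bool))).filter
      (fun p => good z1 z0 zm1 p ∧ ∀ j, j ∉ p.1 → p.2 j = false)

lemma mem_S0 {k : ℕ} {p : Finset (Fin n) × (Fin n → Bool)} :
    p ∈ S0 z1 z0 zm1 k ↔
      (p.1.card = k ∧ good z1 z0 zm1 p ∧ ∀ j, j ∉ p.1 → p.2 j = false) := by
  simp [S0, Finset.mem_powersetCard, and_assoc]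

def q111 (p : Finset (Fin n) × (Fin n → Bool)) : Prop :=
  ∃ j ∈ p.1, xor (z1 j) (p.2 j) = true ∧ xor (z0 j) (p.2 j) = true ∧
    xor (zm1 j) (p.2 j) = true

instance (p : Finset (Fin n) × (Fin n → Bool)) : Decidable (q111 z1 z0 zm1 p) := by
  unfold q111; infer_instance

set_option maxHeartbeats 1000000 in
lemma case111 (k : ℕ) :
    ((S0 z1 z0 zm1 k).filter (q111 z1 z0 zm1)).card =
      (clA z1 z0 zm1).card.choose k * k := by
  classical
  set s := (S0 z1 z0 zm1 k).filter (q111 z1 z0 zm1) with hs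
  set A' := clA z1 z0 zm1 with hA'
  set t := (Finset.powersetCard k A').sigma (fun L => L) with ht
  have hgood1 : ∀ p ∈ s, oneInKSatisfies z1 p.1 p.2 := fun p hp =>
    ((mem_S0 z1 z0 zm1).mp (Finset.mem_filter.mp hp).1).2.1.1
  have key : ∀ p ∈ s, ∀ w ∈ p.1, xor (z1 w) (p.2 w) = true →
      (xor (z0 w) (p.2 w) = true ∧ xor (zm1 w) (p.2 w) = true ∧
        w ∈ A' ∧ p.2 w = !(z1 w) ∧
        ∀ i ∈ p.1, i ≠ w → (p.2 i = z1 i ∧ i ∈ A')) := by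
    intro p hp w hw he
    obtain ⟨hp0, hpq⟩ := Finset.mem_filter.mp hp
    obtain ⟨hcard, ⟨h1, h0, hm1⟩, hzero⟩ := (mem_S0 z1 z0 zm1).mp hp0
    obtain ⟨j, hj, e1, e0, em1⟩ := hpq
    have hjw : j = w := uniq h1 hj hw e1 he
    subst hjw
    have hwA : j ∈ A' := by
      rw [hA', mem_clA]
      rw [xor_true_iff] at e1 e0 em1
      constructor
      · rw [← Bool.not_not (z0 j), ← e0, e1, Bool.not_not]
      · rw [← Bool.not_not (zm1 j), ← em1, e1, Bool.not_not]
    refine ⟨e0, em1, hwA, by rwa [xor_true_iff] at e1, ?_⟩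
    intro i hi hne
    have n1 : ¬ xor (z1 i) (p.2 i) = true := fun h => hne (uniq h1 hi hj h e1)
    have n0 : ¬ xor (z0 i) (p.2 i) = true := fun h => hne (uniq h0 hi hj h e0)
    have nm1 : ¬ xor (zm1 i) (p.2 i) = true := fun h => hne (uniq hm1 hi hj h em1)
    rw [xor_false_iff] at n1 n0 nm1
    refine ⟨n1, ?_⟩
    rw [hA', mem_clA]
    exact ⟨by rw [← n0, n1], by rw [← nm1, n1]⟩
  have hbij : s.card = t.card := by
    refine Finset.card_bij'
      (fun p hp => ⟨p.1, wtn z1 p.1 p.2 (hgood1 p hp)⟩)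
      (fun b _ => (b.1, fun i => if i ∈ b.1 then (if i = b.2 then !(z1 i) else z1 i)
        else false)) ?_ ?_ ?_ ?_
    · -- forward membership
      intro p hp
      obtain ⟨hw1, hw2⟩ := wtn_mem z1 p.1 p.2 (hgood1 p hp)
      obtain ⟨-, -, hwA, -, hrest⟩ := key p hp _ hw1 hw2
      rw [ht, Finset.mem_sigma, Finset.mem_powersetCard]
      refine ⟨⟨?_, ((mem_S0 z1 z0 zm1).mp (Finset.mem_filter.mp hp).1).1⟩, hw1⟩
      intro i hi
      by_cases hiw : i = wtn z1 p.1 p.2 (hgood1 p hp)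
      · subst hiw; exact hwA
      · exact (hrest i hi hiw).2
    · -- backward membership
      rintro ⟨L, u⟩ hb
      rw [ht] at hb
      simp only [Finset.mem_sigma, Finset.mem_powersetCard] at hb
      obtain ⟨⟨hLA, hLcard⟩, huL⟩ := hb
      simp only
      have hAeq : ∀ i ∈ L, z0 i = z1 i ∧ zm1 i = z1 i := by
        intro i hi; exact (mem_clA z1 z0 zm1).mp (hA' ▸ hLA hi)
      have hfilt : ∀ z : Fin n → Bool, (∀ i ∈ L, z i = z1 i) →
          L.filter (fun i => xor (z i)
            ((fun i => if i ∈ L then (if i = u then !(z1 i) else z1 i) else false) i) = true)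
            = {u} := by
        intro z hz
        ext i
        simp only [Finset.mem_filter, Finset.mem_singleton]
        constructor
        · rintro ⟨hi1, hi2⟩
          simp only [hi1, if_true] at hi2
          by_contra hne
          rw [if_neg hne, hz i hi1] at hi2
          simp at hi2
        · rintro rfl
          exact ⟨huL, by simp [huL, hz _ huL]⟩
      rw [hs, Finset.mem_filter, mem_S0]
      refine ⟨⟨hLcard, ⟨?_, ?_, ?_⟩, ?_⟩, ?_⟩
      · show oneInKSatisfies z1 L _
        unfold oneInKSatisfies
        rw [hfilt z1 (fun _ _ => rfl)]; simp
      · show oneInKSatisfies z0 L _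
        unfold oneInKSatisfies
        rw [hfilt z0 (fun i hi => (hAeq i hi).1)]; simp
      · show oneInKSatisfies zm1 L _
        unfold oneInKSatisfies
        rw [hfilt zm1 (fun i hi => (hAeq i hi).2)]; simp
      · intro j hj; simp [hj]
      · refine ⟨u, huL, ?_, ?_, ?_⟩ <;>
          simp [huL, (hAeq u huL).1, (hAeq u huL).2]
    · -- left inverse
      intro p hp
      obtain ⟨hw1, hw2⟩ := wtn_mem z1 p.1 p.2 (hgood1 p hp)
      obtain ⟨-, -, -, hμw, hrest⟩ := key p hp _ hw1 hw2
      have hzero := ((mem_S0 z1 z0 zm1).mp (Finset.mem_filter.mp hp).1).2.2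
      have hfun : (fun i => if i ∈ p.1 then
          (if i = wtn z1 p.1 p.2 (hgood1 p hp) then !(z1 i) else z1 i) else false) = p.2 := by
        funext i
        by_cases hiL : i ∈ p.1
        · simp only [hiL, if_true]
          by_cases hiw : i = wtn z1 p.1 p.2 (hgood1 p hp)
          · rw [if_pos hiw, hiw]
            exact hμw.symm
          · rw [if_neg hiw]
            exact (hrest i hiL hiw).1.symm
        · simp only [hiL, if_false]
          exact (hzero i hiL).symm
      calc (p.1, fun i => if i ∈ p.1 then
            (if i = wtn z1 p.1 p.2 (hgood1 p hp) then !(z1 i) else z1 i) else false)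
          = (p.1, p.2) := by rw [hfun]
        _ = p := rfl
    · -- right inverse
      rintro ⟨L, u⟩ hb
      rw [ht] at hb
      simp only [Finset.mem_sigma, Finset.mem_powersetCard] at hb
      obtain ⟨⟨hLA, hLcard⟩, huL⟩ := hb
      dsimp only
      have hwu : ∀ h, wtn z1 L
          (fun i => if i ∈ L then (if i = u then !(z1 i) else z1 i) else false) h = u := by
        intro h
        refine (wtn_spec z1 L _ _ huL ?_).symm
        simp [huL]
      rw [hwu]
  rw [hbij, ht, Finset.card_sigma]
  rw [Finset.sum_congr rfl (fun L hL => (Finset.mem_powersetCard.mp hL).2)]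
  rw [Finset.sum_const, smul_eq_mul, Finset.card_powersetCard]


def qpair (f g h : Fin n → Bool) (p : Finset (Fin n) × (Fin n → Bool)) : Prop :=
  ∃ j ∈ p.1, xor (f j) (p.2 j) = true ∧ xor (g j) (p.2 j) = true ∧
    ¬ (xor (h j) (p.2 j) = true)

instance (f g h : Fin n → Bool) (p : Finset (Fin n) × (Fin n → Bool)) :
    Decidable (qpair f g h p) := by unfold qpair; infer_instance

lemma card_offdiag {α : Type*} [DecidableEq α] (B : Finset α) :
    ((B ×ˢ B).filter (fun q => ¬ (q.1 = q.2))).card = B.card * B.card - B.card := by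
  have h1 : ((B ×ˢ B).filter (fun q => q.1 = q.2)).card = B.card := by
    refine Finset.card_bij' (fun q _ => q.1) (fun x _ => (x, x)) ?_ ?_ ?_ ?_
    · intro q hq; exact (Finset.mem_product.mp (Finset.mem_filter.mp hq).1).1
    · intro x hx; exact Finset.mem_filter.mpr ⟨Finset.mem_product.mpr ⟨hx, hx⟩, rfl⟩
    · rintro ⟨x, y⟩ hq
      have := (Finset.mem_filter.mp hq).2
      simp only at this
      simp only [this]
    · intro x hx; rfl
  have h2 := Finset.card_filter_add_card_filter_not
    (s := B ×ˢ B) (p := fun q => q.1 = q.2)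
  rw [Finset.card_product] at h2
  omega

set_option maxHeartbeats 1000000 in
lemma casePair (f g h : Fin n → Bool) (k : ℕ) (hk : 2 ≤ k) :
    ((S0 f g h k).filter (qpair f g h)).card =
      (clA f g h).card.choose (k-2) * ((clB f g h).card * ((clB f g h).card - 1)) := by
  classical
  set s := (S0 f g h k).filter (qpair f g h) with hs
  set A' := clA f g h with hA'
  set B' := clB f g h with hB'
  set t := (Finset.powersetCard (k-2) A') ×ˢ
    ((B' ×ˢ B').filter (fun q => ¬ (q.1 = q.2))) with ht
  have hgf : ∀ p ∈ s, oneInKSatisfies f p.1 p.2 := fun p hp =>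
    ((mem_S0 f g h).mp (Finset.mem_filter.mp hp).1).2.1.1
  have hgh : ∀ p ∈ s, oneInKSatisfies h p.1 p.2 := fun p hp =>
    ((mem_S0 f g h).mp (Finset.mem_filter.mp hp).1).2.1.2.2
  have key : ∀ p ∈ s, ∀ u ∈ p.1, ∀ v ∈ p.1, xor (f u) (p.2 u) = true →
      xor (h v) (p.2 v) = true →
      (¬ (u = v) ∧ u ∈ B' ∧ v ∈ B' ∧ p.2 u = !(f u) ∧ p.2 v = f v ∧
        ∀ i ∈ p.1, i ≠ u → i ≠ v → (p.2 i = f i ∧ i ∈ A')) := by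
    intro p hp u hu v hv eu ev
    obtain ⟨hp0, hpq⟩ := Finset.mem_filter.mp hp
    obtain ⟨hcard, ⟨h1, h0, hm1⟩, hzero⟩ := (mem_S0 f g h).mp hp0
    obtain ⟨j, hj, e1, e0, em1⟩ := hpq
    have hju : j = u := uniq h1 hj hu e1 eu
    subst hju
    have huv : ¬ (j = v) := by
      intro e; rw [e] at em1; exact em1 ev
    have hμu : p.2 j = !(f j) := by rwa [xor_true_iff] at e1
    have huB : j ∈ B' := by
      rw [hB', mem_clB]
      constructor
      · rw [xor_true_iff] at e0
        rw [← Bool.not_not (g j), ← e0, hμu, Bool.not_not]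
      · rw [xor_false_iff] at em1
        rw [← em1, hμu]
        simp
    have hnv1 : ¬ xor (f v) (p.2 v) = true := by
      intro e; exact huv (uniq h1 hj hv e1 e)
    have hnv0 : ¬ xor (g v) (p.2 v) = true := by
      intro e; exact huv (uniq h0 hj hv e0 e)
    have hμv : p.2 v = f v := by rwa [xor_false_iff] at hnv1
    have hvB : v ∈ B' := by
      rw [hB', mem_clB]
      rw [xor_false_iff] at hnv0
      rw [xor_true_iff] at ev
      constructor
      · rw [← hnv0, hμv]
      · rw [← Bool.not_not (h v), ← ev, hμv]
        simp
    refine ⟨huv, huB, hvB, hμu, hμv, ?_⟩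
    intro i hi hiu hiv
    have n1 : ¬ xor (f i) (p.2 i) = true := fun e => hiu (uniq h1 hi hj e e1)
    have n0 : ¬ xor (g i) (p.2 i) = true := fun e => hiu (uniq h0 hi hj e e0)
    have nm1 : ¬ xor (h i) (p.2 i) = true := fun e => hiv (uniq hm1 hi hv e ev)
    rw [xor_false_iff] at n1 n0 nm1
    refine ⟨n1, ?_⟩
    rw [hA', mem_clA]
    exact ⟨by rw [← n0, n1], by rw [← nm1, n1]⟩
  have hABdisj : ∀ i : Fin n, i ∈ A' → i ∈ B' → False := by
    intro i hiA hiB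
    rw [hA', mem_clA] at hiA; rw [hB', mem_clB] at hiB
    exact hiB.2 hiA.2
  have hbij : s.card = t.card := by
    refine Finset.card_bij'
      (fun p hp => (p.1 \ {wtn f p.1 p.2 (hgf p hp), wtn h p.1 p.2 (hgh p hp)},
        (wtn f p.1 p.2 (hgf p hp), wtn h p.1 p.2 (hgh p hp))))
      (fun b _ => (insert b.2.1 (insert b.2.2 b.1),
        fun i => if i = b.2.1 then !(f i) else if i = b.2.2 then f i
          else if i ∈ b.1 then f i else false)) ?_ ?_ ?_ ?_
    · -- forward membership
      intro p hp
      obtain ⟨hu1, hu2⟩ := wtn_mem f p.1 p.2 (hgf p hp)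
      obtain ⟨hv1, hv2⟩ := wtn_mem h p.1 p.2 (hgh p hp)
      obtain ⟨huv, huB, hvB, -, -, hrest⟩ := key p hp _ hu1 _ hv1 hu2 hv2
      have hcard : p.1.card = k := ((mem_S0 f g h).mp (Finset.mem_filter.mp hp).1).1
      rw [ht, Finset.mem_product]
      constructor
      · rw [Finset.mem_powersetCard]
        constructor
        · intro i hi
          rw [Finset.mem_sdiff, Finset.mem_insert, Finset.mem_singleton] at hi
          push_neg at hi
          exact (hrest i hi.1 hi.2.1 hi.2.2).2
        · rw [Finset.card_sdiff_of_subset (by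
            intro x hx
            rw [Finset.mem_insert, Finset.mem_singleton] at hx
            rcases hx with rfl | rfl
            · exact hu1
            · exact hv1)]
          rw [Finset.card_insert_of_notMem (by simpa using huv), Finset.card_singleton, hcard]
      · exact Finset.mem_filter.mpr ⟨Finset.mem_product.mpr ⟨huB, hvB⟩, huv⟩
    · -- backward membership
      rintro ⟨R, u, v⟩ hb
      dsimp only
      rw [ht] at hb
      simp only [Finset.mem_product, Finset.mem_powersetCard, Finset.mem_filter] at hb
      obtain ⟨⟨hRA, hRcard⟩, ⟨huB, hvB⟩, huv⟩ := hb
      have huR : u ∉ R := fun hu => hABdisj u (hRA hu) huB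
      have hvR : v ∉ R := fun hv => hABdisj v (hRA hv) hvB
      rw [hB', mem_clB] at huB hvB
      have hAeq : ∀ i ∈ R, g i = f i ∧ h i = f i := by
        intro i hi; exact (mem_clA f g h).mp (hA' ▸ hRA hi)
      set L := insert u (insert v R) with hL
      set μ : Fin n → Bool := fun i => if i = u then !(f i) else if i = v then f i
        else if i ∈ R then f i else false with hμ
      have hμu : μ u = !(f u) := by simp [hμ]
      have hμv : μ v = f v := by simp [hμ, (Ne.symm huv : ¬ v = u)]
      have hμR : ∀ i ∈ R, μ i = f i := by
        intro i hi
        have h1 : ¬ (i = u) := fun e => huR (e ▸ hi)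
        have h2 : ¬ (i = v) := fun e => hvR (e ▸ hi)
        simp [hμ, h1, h2, hi]
      have hFf : L.filter (fun i => xor (f i) (μ i) = true) = {u} := by
        ext i
        simp only [Finset.mem_filter, Finset.mem_singleton, hL, Finset.mem_insert]
        constructor
        · rintro ⟨(rfl | rfl | hiR), e⟩
          · rfl
          · rw [hμv] at e; simp at e
          · rw [hμR i hiR] at e; simp at e
        · rintro rfl
          exact ⟨Or.inl rfl, by rw [hμu]; simp⟩
      have hFg : L.filter (fun i => xor (g i) (μ i) = true) = {u} := by
        ext i
        simp only [Finset.mem_filter, Finset.mem_singleton, hL, Finset.mem_insert]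
        constructor
        · rintro ⟨(rfl | rfl | hiR), e⟩
          · rfl
          · rw [hμv, hvB.1] at e; simp at e
          · rw [hμR i hiR, (hAeq i hiR).1] at e; simp at e
        · rintro rfl
          exact ⟨Or.inl rfl, by rw [hμu, huB.1]; simp⟩
      have hFh : L.filter (fun i => xor (h i) (μ i) = true) = {v} := by
        have hhu : h u = !(f u) := by
          rcases Bool.eq_or_eq_not (h u) (f u) with e | e
          · exact absurd e huB.2
          · exact e
        have hhv : h v = !(f v) := by
          rcases Bool.eq_or_eq_not (h v) (f v) with e | e
          · exact absurd e hvB.2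
          · exact e
        ext i
        simp only [Finset.mem_filter, Finset.mem_singleton, hL, Finset.mem_insert]
        constructor
        · rintro ⟨(rfl | rfl | hiR), e⟩
          · rw [hμu, hhu] at e; simp at e
          · rfl
          · rw [hμR i hiR, (hAeq i hiR).2] at e; simp at e
        · rintro rfl
          exact ⟨Or.inr (Or.inl rfl), by rw [hμv, hhv]; simp⟩
      have hLcard : L.card = k := by
        rw [hL, Finset.card_insert_of_notMem (by
            rw [Finset.mem_insert]; push_neg; exact ⟨huv, huR⟩),
          Finset.card_insert_of_notMem hvR, hRcard]
        omega
      rw [hs, Finset.mem_filter, mem_S0]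
      refine ⟨⟨hLcard, ⟨?_, ?_, ?_⟩, ?_⟩, ?_⟩
      · show oneInKSatisfies f L μ
        unfold oneInKSatisfies; rw [hFf]; simp
      · show oneInKSatisfies g L μ
        unfold oneInKSatisfies; rw [hFg]; simp
      · show oneInKSatisfies h L μ
        unfold oneInKSatisfies; rw [hFh]; simp
      · intro i hiL
        have h1 : ¬ (i = u) := fun e => hiL (by
          rw [hL, e]; exact Finset.mem_insert_self u _)
        have h2 : ¬ (i = v) := fun e => hiL (by
          rw [hL, e]; exact Finset.mem_insert_of_mem (Finset.mem_insert_self v R))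
        have h3 : i ∉ R := fun hiR => hiL (by
          rw [hL]; exact Finset.mem_insert_of_mem (Finset.mem_insert_of_mem hiR))
        simp [hμ, h1, h2, h3]
      · refine ⟨u, Finset.mem_insert_self u _, ?_, ?_, ?_⟩
        · show xor (f u) (μ u) = true
          rw [hμu]; simp
        · show xor (g u) (μ u) = true
          rw [hμu, huB.1]; simp
        · have hhu : h u = !(f u) := by
            rcases Bool.eq_or_eq_not (h u) (f u) with e | e
            · exact absurd e huB.2
            · exact e
          show ¬ (xor (h u) (μ u) = true)
          rw [hμu, hhu]; simp
    · -- left inverse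
      intro p hp
      obtain ⟨hu1, hu2⟩ := wtn_mem f p.1 p.2 (hgf p hp)
      obtain ⟨hv1, hv2⟩ := wtn_mem h p.1 p.2 (hgh p hp)
      obtain ⟨huv, -, -, hμu, hμv, hrest⟩ := key p hp _ hu1 _ hv1 hu2 hv2
      have hzero := ((mem_S0 f g h).mp (Finset.mem_filter.mp hp).1).2.2
      set u := wtn f p.1 p.2 (hgf p hp) with hu
      set v := wtn h p.1 p.2 (hgh p hp) with hv
      have hLrec : insert u (insert v (p.1 \ {u, v})) = p.1 := by
        ext i
        simp only [Finset.mem_insert, Finset.mem_sdiff, Finset.mem_singleton]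
        constructor
        · rintro (rfl | rfl | ⟨hi, -⟩)
          · exact hu1
          · exact hv1
          · exact hi
        · intro hi
          by_cases e1 : i = u
          · exact Or.inl e1
          · by_cases e2 : i = v
            · exact Or.inr (Or.inl e2)
            · exact Or.inr (Or.inr ⟨hi, by push_neg; exact ⟨e1, e2⟩⟩)
      have hμrec : (fun i => if i = u then !(f i) else if i = v then f i
          else if i ∈ p.1 \ {u, v} then f i else false) = p.2 := by
        funext i
        by_cases e1 : i = u
        · subst e1; rw [if_pos rfl]; exact hμu.symm
        · rw [if_neg e1]
          by_cases e2 : i = v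
          · subst e2; rw [if_pos rfl]; exact hμv.symm
          · rw [if_neg e2]
            by_cases hiL : i ∈ p.1
            · rw [if_pos (by simp [Finset.mem_sdiff, hiL, e1, e2])]
              exact (hrest i hiL e1 e2).1.symm
            · rw [if_neg (by simp [Finset.mem_sdiff, hiL])]
              exact (hzero i hiL).symm
      calc (insert u (insert v (p.1 \ {u, v})),
            fun i => if i = u then !(f i) else if i = v then f i
              else if i ∈ p.1 \ {u, v} then f i else false)
          = (p.1, p.2) := by rw [hLrec, hμrec]
        _ = p := rfl
    · -- right inverse
      rintro ⟨R, u, v⟩ hb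
      rw [ht] at hb
      simp only [Finset.mem_product, Finset.mem_powersetCard, Finset.mem_filter] at hb
      obtain ⟨⟨hRA, hRcard⟩, ⟨huB, hvB⟩, huv⟩ := hb
      have huR : u ∉ R := fun hu => hABdisj u (hRA hu) huB
      have hvR : v ∉ R := fun hv => hABdisj v (hRA hv) hvB
      rw [hB', mem_clB] at huB hvB
      dsimp only
      set L := insert u (insert v R) with hL
      set μ : Fin n → Bool := fun i => if i = u then !(f i) else if i = v then f i
        else if i ∈ R then f i else false with hμ
      have hwu : ∀ hh, wtn f L μ hh = u := by
        intro hh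
        refine (wtn_spec f L μ hh (by rw [hL]; exact Finset.mem_insert_self u _) ?_).symm
        simp [hμ]
      have hhv : h v = !(f v) := by
        rcases Bool.eq_or_eq_not (h v) (f v) with e | e
        · exact absurd e hvB.2
        · exact e
      have hwv : ∀ hh, wtn h L μ hh = v := by
        intro hh
        refine (wtn_spec h L μ hh (by
          rw [hL]; exact Finset.mem_insert_of_mem (Finset.mem_insert_self v R)) ?_).symm
        have : μ v = f v := by simp [hμ, (Ne.symm huv : ¬ v = u)]
        rw [this, hhv]; simp
      rw [hwu, hwv]
      have : L \ {u, v} = R := by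
        ext i
        simp only [Finset.mem_sdiff, hL, Finset.mem_insert, Finset.mem_singleton]
        constructor
        · rintro ⟨(rfl | rfl | hiR), hni⟩
          · exact absurd (Or.inl rfl) hni
          · exact absurd (Or.inr rfl) hni
          · exact hiR
        · intro hiR
          refine ⟨Or.inr (Or.inr hiR), ?_⟩
          push_neg
          exact ⟨fun e => huR (e ▸ hiR), fun e => hvR (e ▸ hiR)⟩
      rw [this]
  rw [hbij, ht, Finset.card_product, Finset.card_powersetCard, card_offdiag,
    Nat.mul_sub_one]


lemma bool_ne_iff' {x y : Bool} : ¬ (x = y) ↔ x = !y := by revert x y; decide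

set_option maxHeartbeats 2000000 in
lemma caseRest (k : ℕ) (hk : 3 ≤ k) :
    ((S0 z1 z0 zm1 k).filter (fun p => ¬ q111 z1 z0 zm1 p ∧ ¬ qpair z1 z0 zm1 p ∧
      ¬ qpair z1 zm1 z0 p ∧ ¬ qpair z0 zm1 z1 p)).card =
      (clA z1 z0 zm1).card.choose (k-3) *
        ((clB z1 z0 zm1).card * ((clC z1 z0 zm1).card * (clD z1 z0 zm1).card)) := by
  classical
  set s := (S0 z1 z0 zm1 k).filter (fun p => ¬ q111 z1 z0 zm1 p ∧ ¬ qpair z1 z0 zm1 p ∧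
      ¬ qpair z1 zm1 z0 p ∧ ¬ qpair z0 zm1 z1 p) with hs
  set A' := clA z1 z0 zm1 with hA'
  set B' := clB z1 z0 zm1 with hB'
  set C' := clC z1 z0 zm1 with hC'
  set D' := clD z1 z0 zm1 with hD'
  set t := (Finset.powersetCard (k-3) A') ×ˢ (B' ×ˢ (C' ×ˢ D')) with ht
  have hg1 : ∀ p ∈ s, oneInKSatisfies z1 p.1 p.2 := fun p hp =>
    ((mem_S0 z1 z0 zm1).mp (Finset.mem_filter.mp hp).1).2.1.1
  have hg0 : ∀ p ∈ s, oneInKSatisfies z0 p.1 p.2 := fun p hp =>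
    ((mem_S0 z1 z0 zm1).mp (Finset.mem_filter.mp hp).1).2.1.2.1
  have hgm : ∀ p ∈ s, oneInKSatisfies zm1 p.1 p.2 := fun p hp =>
    ((mem_S0 z1 z0 zm1).mp (Finset.mem_filter.mp hp).1).2.1.2.2
  have key : ∀ p ∈ s, ∀ u ∈ p.1, ∀ v ∈ p.1, ∀ w ∈ p.1,
      xor (zm1 u) (p.2 u) = true → xor (z0 v) (p.2 v) = true →
      xor (z1 w) (p.2 w) = true →
      (¬ (u = v) ∧ ¬ (u = w) ∧ ¬ (v = w) ∧ u ∈ B' ∧ v ∈ C' ∧ w ∈ D' ∧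
        p.2 u = z1 u ∧ p.2 v = z1 v ∧ p.2 w = !(z1 w) ∧
        ∀ i ∈ p.1, i ≠ u → i ≠ v → i ≠ w → (p.2 i = z1 i ∧ i ∈ A')) := by
    intro p hp u hu v hv w hw eu ev ew
    obtain ⟨hp0, hq111, hq110, hq101, hq011⟩ := Finset.mem_filter.mp hp
    obtain ⟨hcard, ⟨h1, h0, hm1⟩, hzero⟩ := (mem_S0 z1 z0 zm1).mp hp0
    -- pattern at w (the z1 witness)
    have n0w : ¬ xor (z0 w) (p.2 w) = true := by
      intro e
      by_cases em : xor (zm1 w) (p.2 w) = true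
      · exact hq111 ⟨w, hw, ew, e, em⟩
      · exact hq110 ⟨w, hw, ew, e, em⟩
    have nmw : ¬ xor (zm1 w) (p.2 w) = true := by
      intro e
      exact hq101 ⟨w, hw, ew, e, n0w⟩
    -- pattern at v (the z0 witness)
    have n1v : ¬ xor (z1 v) (p.2 v) = true := by
      intro e
      have hvw : v = w := uniq h1 hv hw e ew
      rw [hvw] at ev; exact n0w ev
    have nmv : ¬ xor (zm1 v) (p.2 v) = true := by
      intro e
      exact hq011 ⟨v, hv, ev, e, n1v⟩
    -- pattern at u (the zm1 witness)
    have n1u : ¬ xor (z1 u) (p.2 u) = true := by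
      intro e
      have huw : u = w := uniq h1 hu hw e ew
      rw [huw] at eu; exact nmw eu
    have n0u : ¬ xor (z0 u) (p.2 u) = true := by
      intro e
      have huv : u = v := uniq h0 hu hv e ev
      rw [huv] at eu; exact nmv eu
    have huv : ¬ (u = v) := by
      intro e; rw [e] at eu; exact nmv eu
    have huw : ¬ (u = w) := by
      intro e; rw [e] at eu; exact nmw eu
    have hvw : ¬ (v = w) := by
      intro e; rw [e] at ev; exact n0w ev
    rw [xor_false_iff] at n0w nmw n1v nmv n1u n0u
    rw [xor_true_iff] at eu ev ew
    have huB : u ∈ B' := by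
      rw [hB', mem_clB]
      refine ⟨by rw [← n0u, n1u], ?_⟩
      rw [bool_ne_iff', ← n1u, eu, Bool.not_not]
    have hvC : v ∈ C' := by
      rw [hC', mem_clC]
      refine ⟨?_, by rw [← nmv, n1v]⟩
      rw [bool_ne_iff', ← n1v, ev, Bool.not_not]
    have hwD : w ∈ D' := by
      rw [hD', mem_clD]
      constructor
      · rw [bool_ne_iff', ← n0w, ew]
      · rw [bool_ne_iff', ← nmw, ew]
    refine ⟨huv, huw, hvw, huB, hvC, hwD, n1u, n1v, ew, ?_⟩
    intro i hi hiu hiv hiw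
    have m1 : ¬ xor (z1 i) (p.2 i) = true := fun e => hiw (uniq h1 hi hw e (by
      rw [xor_true_iff]; exact ew))
    have m0 : ¬ xor (z0 i) (p.2 i) = true := fun e => hiv (uniq h0 hi hv e (by
      rw [xor_true_iff]; exact ev))
    have mm : ¬ xor (zm1 i) (p.2 i) = true := fun e => hiu (uniq hm1 hi hu e (by
      rw [xor_true_iff]; exact eu))
    rw [xor_false_iff] at m1 m0 mm
    refine ⟨m1, ?_⟩
    rw [hA', mem_clA]
    exact ⟨by rw [← m0, m1], by rw [← mm, m1]⟩
  have hdisjAB : ∀ i : Fin n, i ∈ A' → i ∈ B' → False := fun i hA hB =>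
    ((mem_clB z1 z0 zm1).mp hB).2 ((mem_clA z1 z0 zm1).mp hA).2
  have hdisjAC : ∀ i : Fin n, i ∈ A' → i ∈ C' → False := fun i hA hC =>
    ((mem_clC z1 z0 zm1).mp hC).1 ((mem_clA z1 z0 zm1).mp hA).1
  have hdisjAD : ∀ i : Fin n, i ∈ A' → i ∈ D' → False := fun i hA hD =>
    ((mem_clD z1 z0 zm1).mp hD).1 ((mem_clA z1 z0 zm1).mp hA).1
  have hdisjBC : ∀ i : Fin n, i ∈ B' → i ∈ C' → False := fun i hB hC =>
    ((mem_clC z1 z0 zm1).mp hC).1 ((mem_clB z1 z0 zm1).mp hB).1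
  have hdisjBD : ∀ i : Fin n, i ∈ B' → i ∈ D' → False := fun i hB hD =>
    ((mem_clD z1 z0 zm1).mp hD).1 ((mem_clB z1 z0 zm1).mp hB).1
  have hdisjCD : ∀ i : Fin n, i ∈ C' → i ∈ D' → False := fun i hC hD =>
    ((mem_clD z1 z0 zm1).mp hD).2 ((mem_clC z1 z0 zm1).mp hC).2
  have hbij : s.card = t.card := by
    refine Finset.card_bij'
      (fun p hp => (p.1 \ {wtn zm1 p.1 p.2 (hgm p hp), wtn z0 p.1 p.2 (hg0 p hp),
          wtn z1 p.1 p.2 (hg1 p hp)},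
        (wtn zm1 p.1 p.2 (hgm p hp), (wtn z0 p.1 p.2 (hg0 p hp), wtn z1 p.1 p.2 (hg1 p hp)))))
      (fun b _ => (insert b.2.1 (insert b.2.2.1 (insert b.2.2.2 b.1)),
        fun i => if i = b.2.2.2 then !(z1 i) else if i = b.2.2.1 then z1 i
          else if i = b.2.1 then z1 i else if i ∈ b.1 then z1 i else false)) ?_ ?_ ?_ ?_
    · -- forward membership
      intro p hp
      obtain ⟨hu1, hu2⟩ := wtn_mem zm1 p.1 p.2 (hgm p hp)
      obtain ⟨hv1, hv2⟩ := wtn_mem z0 p.1 p.2 (hg0 p hp)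
      obtain ⟨hw1, hw2⟩ := wtn_mem z1 p.1 p.2 (hg1 p hp)
      obtain ⟨huv, huw, hvw, huB, hvC, hwD, -, -, -, hrest⟩ :=
        key p hp _ hu1 _ hv1 _ hw1 hu2 hv2 hw2
      have hcard : p.1.card = k := ((mem_S0 z1 z0 zm1).mp (Finset.mem_filter.mp hp).1).1
      rw [ht, Finset.mem_product]
      refine ⟨?_, ?_⟩
      · rw [Finset.mem_powersetCard]
        constructor
        · intro i hi
          rw [Finset.mem_sdiff, Finset.mem_insert, Finset.mem_insert,
            Finset.mem_singleton] at hi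
          push_neg at hi
          exact (hrest i hi.1 hi.2.1 hi.2.2.1 hi.2.2.2).2
        · rw [Finset.card_sdiff_of_subset (by
            intro x hx
            rw [Finset.mem_insert, Finset.mem_insert, Finset.mem_singleton] at hx
            rcases hx with rfl | rfl | rfl
            · exact hu1
            · exact hv1
            · exact hw1)]
          rw [Finset.card_insert_of_notMem (by
              rw [Finset.mem_insert, Finset.mem_singleton]; push_neg; exact ⟨huv, huw⟩),
            Finset.card_insert_of_notMem (by rw [Finset.mem_singleton]; exact hvw),
            Finset.card_singleton, hcard]
      · rw [Finset.mem_product]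
        refine ⟨huB, ?_⟩
        rw [Finset.mem_product]
        exact ⟨hvC, hwD⟩
    · -- backward membership
      rintro ⟨R, u, v, w⟩ hb
      dsimp only
      rw [ht] at hb
      simp only [Finset.mem_product, Finset.mem_powersetCard] at hb
      obtain ⟨⟨hRA, hRcard⟩, huB, hvC, hwD⟩ := hb
      have huR : u ∉ R := fun e => hdisjAB u (hRA e) huB
      have hvR : v ∉ R := fun e => hdisjAC v (hRA e) hvC
      have hwR : w ∉ R := fun e => hdisjAD w (hRA e) hwD
      have huv : ¬ (u = v) := fun e => hdisjBC u huB (e ▸ hvC)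
      have huw : ¬ (u = w) := fun e => hdisjBD u huB (e ▸ hwD)
      have hvw : ¬ (v = w) := fun e => hdisjCD v hvC (e ▸ hwD)
      rw [hB', mem_clB] at huB
      rw [hC', mem_clC] at hvC
      rw [hD', mem_clD] at hwD
      have hAeq : ∀ i ∈ R, z0 i = z1 i ∧ zm1 i = z1 i := by
        intro i hi; exact (mem_clA z1 z0 zm1).mp (hA' ▸ hRA hi)
      set L := insert u (insert v (insert w R)) with hL
      set μ : Fin n → Bool := fun i => if i = w then !(z1 i) else if i = v then z1 i
        else if i = u then z1 i else if i ∈ R then z1 i else false with hμ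
      have huL : u ∈ L := Finset.mem_insert_self u _
      have hvL : v ∈ L := by
        rw [hL]; exact Finset.mem_insert_of_mem (Finset.mem_insert_self v _)
      have hwL : w ∈ L := by
        rw [hL]
        exact Finset.mem_insert_of_mem (Finset.mem_insert_of_mem (Finset.mem_insert_self w R))
      have hμu : μ u = z1 u := by simp [hμ, huw, huv]
      have hμv : μ v = z1 v := by simp [hμ, hvw, (fun e => huv e.symm : ¬ v = u)]
      have hμw : μ w = !(z1 w) := by simp [hμ]
      have hμR : ∀ i ∈ R, μ i = z1 i := by
        intro i hi
        have e1 : ¬ (i = u) := fun e => huR (e ▸ hi)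
        have e2 : ¬ (i = v) := fun e => hvR (e ▸ hi)
        have e3 : ¬ (i = w) := fun e => hwR (e ▸ hi)
        simp [hμ, e1, e2, e3, hi]
      have hz0w : z0 w = !(z1 w) := bool_ne_iff'.mp hwD.1
      have hzmw : zm1 w = !(z1 w) := bool_ne_iff'.mp hwD.2
      have hz0v : z0 v = !(z1 v) := bool_ne_iff'.mp hvC.1
      have hzmu : zm1 u = !(z1 u) := bool_ne_iff'.mp huB.2
      have hF1 : L.filter (fun i => xor (z1 i) (μ i) = true) = {w} := by
        ext i
        simp only [Finset.mem_filter, Finset.mem_singleton, hL, Finset.mem_insert]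
        constructor
        · rintro ⟨(rfl | rfl | rfl | hiR), e⟩
          · rw [hμu] at e; simp at e
          · rw [hμv] at e; simp at e
          · rfl
          · rw [hμR i hiR] at e; simp at e
        · rintro rfl
          exact ⟨Or.inr (Or.inr (Or.inl rfl)), by rw [hμw]; simp⟩
      have hF0 : L.filter (fun i => xor (z0 i) (μ i) = true) = {v} := by
        ext i
        simp only [Finset.mem_filter, Finset.mem_singleton, hL, Finset.mem_insert]
        constructor
        · rintro ⟨(rfl | rfl | rfl | hiR), e⟩
          · rw [hμu, huB.1] at e; simp at e
          · rfl
          · rw [hμw, hz0w] at e; simp at e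
          · rw [hμR i hiR, (hAeq i hiR).1] at e; simp at e
        · rintro rfl
          exact ⟨Or.inr (Or.inl rfl), by rw [hμv, hz0v]; simp⟩
      have hFm : L.filter (fun i => xor (zm1 i) (μ i) = true) = {u} := by
        ext i
        simp only [Finset.mem_filter, Finset.mem_singleton, hL, Finset.mem_insert]
        constructor
        · rintro ⟨(rfl | rfl | rfl | hiR), e⟩
          · rfl
          · rw [hμv, hvC.2] at e; simp at e
          · rw [hμw, hzmw] at e; simp at e
          · rw [hμR i hiR, (hAeq i hiR).2] at e; simp at e
        · rintro rfl
          exact ⟨Or.inl rfl, by rw [hμu, hzmu]; simp⟩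
      have hLcard : L.card = k := by
        rw [hL, Finset.card_insert_of_notMem (by
            rw [Finset.mem_insert, Finset.mem_insert]; push_neg
            exact ⟨huv, huw, huR⟩),
          Finset.card_insert_of_notMem (by
            rw [Finset.mem_insert]; push_neg; exact ⟨hvw, hvR⟩),
          Finset.card_insert_of_notMem hwR, hRcard]
        omega
      have memF : ∀ (zz : Fin n → Bool) (x j : Fin n),
          L.filter (fun i => xor (zz i) (μ i) = true) = {x} → j ∈ L →
          xor (zz j) (μ j) = true → j = x := by
        intro zz x j hf hj e
        have : j ∈ L.filter (fun i => xor (zz i) (μ i) = true) :=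
          Finset.mem_filter.mpr ⟨hj, e⟩
        rw [hf] at this
        exact Finset.mem_singleton.mp this
      rw [hs, Finset.mem_filter, mem_S0]
      refine ⟨⟨hLcard, ⟨?_, ?_, ?_⟩, ?_⟩, ?_, ?_, ?_, ?_⟩
      · show oneInKSatisfies z1 L μ
        unfold oneInKSatisfies; rw [hF1]; simp
      · show oneInKSatisfies z0 L μ
        unfold oneInKSatisfies; rw [hF0]; simp
      · show oneInKSatisfies zm1 L μ
        unfold oneInKSatisfies; rw [hFm]; simp
      · intro i hiL
        have e1 : ¬ (i = u) := fun e => hiL (e ▸ huL)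
        have e2 : ¬ (i = v) := fun e => hiL (e ▸ hvL)
        have e3 : ¬ (i = w) := fun e => hiL (e ▸ hwL)
        have e4 : i ∉ R := fun hiR => hiL (by
          rw [hL]
          exact Finset.mem_insert_of_mem (Finset.mem_insert_of_mem
            (Finset.mem_insert_of_mem hiR)))
        simp [hμ, e1, e2, e3, e4]
      · rintro ⟨j, hj, e1, e0, em⟩
        have h1 := memF z1 w j hF1 hj e1
        have h2 := memF z0 v j hF0 hj e0
        exact hvw (h2 ▸ h1)
      · rintro ⟨j, hj, e1, e0, em⟩
        have h1 := memF z1 w j hF1 hj e1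
        have h2 := memF z0 v j hF0 hj e0
        exact hvw (h2 ▸ h1)
      · rintro ⟨j, hj, e1, em, e0⟩
        have h1 := memF z1 w j hF1 hj e1
        have h2 := memF zm1 u j hFm hj em
        exact huw (h2 ▸ h1)
      · rintro ⟨j, hj, e0, em, e1⟩
        have h1 := memF z0 v j hF0 hj e0
        have h2 := memF zm1 u j hFm hj em
        exact huv (h2 ▸ h1)
    · -- left inverse
      intro p hp
      obtain ⟨hu1, hu2⟩ := wtn_mem zm1 p.1 p.2 (hgm p hp)
      obtain ⟨hv1, hv2⟩ := wtn_mem z0 p.1 p.2 (hg0 p hp)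
      obtain ⟨hw1, hw2⟩ := wtn_mem z1 p.1 p.2 (hg1 p hp)
      obtain ⟨huv, huw, hvw, -, -, -, hμu, hμv, hμw, hrest⟩ :=
        key p hp _ hu1 _ hv1 _ hw1 hu2 hv2 hw2
      have hzero := ((mem_S0 z1 z0 zm1).mp (Finset.mem_filter.mp hp).1).2.2
      set u := wtn zm1 p.1 p.2 (hgm p hp) with hu
      set v := wtn z0 p.1 p.2 (hg0 p hp) with hv
      set w := wtn z1 p.1 p.2 (hg1 p hp) with hw
      have hLrec : insert u (insert v (insert w (p.1 \ {u, v, w}))) = p.1 := by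
        ext i
        simp only [Finset.mem_insert, Finset.mem_sdiff, Finset.mem_singleton]
        constructor
        · rintro (rfl | rfl | rfl | ⟨hi, -⟩)
          · exact hu1
          · exact hv1
          · exact hw1
          · exact hi
        · intro hi
          by_cases e1 : i = u
          · exact Or.inl e1
          by_cases e2 : i = v
          · exact Or.inr (Or.inl e2)
          by_cases e3 : i = w
          · exact Or.inr (Or.inr (Or.inl e3))
          · exact Or.inr (Or.inr (Or.inr ⟨hi, by push_neg; exact ⟨e1, e2, e3⟩⟩))
      have hμrec : (fun i => if i = w then !(z1 i) else if i = v then z1 i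
          else if i = u then z1 i else if i ∈ p.1 \ {u, v, w} then z1 i else false) = p.2 := by
        funext i
        by_cases e3 : i = w
        · subst e3; rw [if_pos rfl]; exact hμw.symm
        rw [if_neg e3]
        by_cases e2 : i = v
        · subst e2; rw [if_pos rfl]; exact hμv.symm
        rw [if_neg e2]
        by_cases e1 : i = u
        · subst e1; rw [if_pos rfl]; exact hμu.symm
        rw [if_neg e1]
        by_cases hiL : i ∈ p.1
        · rw [if_pos (by simp [Finset.mem_sdiff, hiL, e1, e2, e3])]
          exact (hrest i hiL e1 e2 e3).1.symm
        · rw [if_neg (by simp [Finset.mem_sdiff, hiL])]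
          exact (hzero i hiL).symm
      calc (insert u (insert v (insert w (p.1 \ {u, v, w}))),
            fun i => if i = w then !(z1 i) else if i = v then z1 i
              else if i = u then z1 i else if i ∈ p.1 \ {u, v, w} then z1 i else false)
          = (p.1, p.2) := by rw [hLrec, hμrec]
        _ = p := rfl
    · -- right inverse
      rintro ⟨R, u, v, w⟩ hb
      dsimp only
      rw [ht] at hb
      simp only [Finset.mem_product, Finset.mem_powersetCard] at hb
      obtain ⟨⟨hRA, hRcard⟩, huB, hvC, hwD⟩ := hb
      have huR : u ∉ R := fun e => hdisjAB u (hRA e) huB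
      have hvR : v ∉ R := fun e => hdisjAC v (hRA e) hvC
      have hwR : w ∉ R := fun e => hdisjAD w (hRA e) hwD
      have huv : ¬ (u = v) := fun e => hdisjBC u huB (e ▸ hvC)
      have huw : ¬ (u = w) := fun e => hdisjBD u huB (e ▸ hwD)
      have hvw : ¬ (v = w) := fun e => hdisjCD v hvC (e ▸ hwD)
      rw [hB', mem_clB] at huB
      rw [hC', mem_clC] at hvC
      rw [hD', mem_clD] at hwD
      set L := insert u (insert v (insert w R)) with hL
      set μ : Fin n → Bool := fun i => if i = w then !(z1 i) else if i = v then z1 i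
        else if i = u then z1 i else if i ∈ R then z1 i else false with hμ
      have huL : u ∈ L := Finset.mem_insert_self u _
      have hvL : v ∈ L := by
        rw [hL]; exact Finset.mem_insert_of_mem (Finset.mem_insert_self v _)
      have hwL : w ∈ L := by
        rw [hL]
        exact Finset.mem_insert_of_mem (Finset.mem_insert_of_mem (Finset.mem_insert_self w R))
      have hμu : μ u = z1 u := by simp [hμ, huw, huv]
      have hμv : μ v = z1 v := by simp [hμ, hvw, (fun e => huv e.symm : ¬ v = u)]
      have hμw : μ w = !(z1 w) := by simp [hμ]
      have hwtn1 : ∀ hh, wtn z1 L μ hh = w := by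
        intro hh
        refine (wtn_spec z1 L μ hh hwL ?_).symm
        rw [hμw]; simp
      have hwtn0 : ∀ hh, wtn z0 L μ hh = v := by
        intro hh
        refine (wtn_spec z0 L μ hh hvL ?_).symm
        rw [hμv, bool_ne_iff'.mp hvC.1]; simp
      have hwtnm : ∀ hh, wtn zm1 L μ hh = u := by
        intro hh
        refine (wtn_spec zm1 L μ hh huL ?_).symm
        rw [hμu, bool_ne_iff'.mp huB.2]; simp
      rw [hwtn1, hwtn0, hwtnm]
      have : L \ {u, v, w} = R := by
        ext i
        simp only [Finset.mem_sdiff, hL, Finset.mem_insert, Finset.mem_singleton]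
        constructor
        · rintro ⟨(rfl | rfl | rfl | hiR), hni⟩
          · exact absurd (Or.inl rfl) hni
          · exact absurd (Or.inr (Or.inl rfl)) hni
          · exact absurd (Or.inr (Or.inr rfl)) hni
          · exact hiR
        · intro hiR
          refine ⟨Or.inr (Or.inr (Or.inr hiR)), ?_⟩
          push_neg
          exact ⟨fun e => huR (e ▸ hiR), fun e => hvR (e ▸ hiR), fun e => hwR (e ▸ hiR)⟩
      rw [this]
  rw [hbij, ht, Finset.card_product, Finset.card_product, Finset.card_product,
    Finset.card_powersetCard]


lemma S0_perm1 (k : ℕ) : S0 z1 z0 zm1 k = S0 z1 zm1 z0 k := by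
  unfold S0
  apply Finset.filter_congr
  intro p _
  unfold good
  tauto

lemma S0_perm2 (k : ℕ) : S0 z1 z0 zm1 k = S0 z0 zm1 z1 k := by
  unfold S0
  apply Finset.filter_congr
  intro p _
  unfold good
  tauto

lemma clA_perm1 : clA z1 zm1 z0 = clA z1 z0 zm1 := by
  ext j
  simp only [clA, Finset.mem_filter, Finset.mem_univ, true_and]
  tauto

lemma clA_perm2 : clA z0 zm1 z1 = clA z1 z0 zm1 := by
  ext j
  simp only [clA, Finset.mem_filter, Finset.mem_univ, true_and]
  cases h1 : z1 j <;> cases h0 : z0 j <;> cases hm : zm1 j <;> simp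

lemma clB_perm1 : clB z1 zm1 z0 = clC z1 z0 zm1 := by
  ext j
  simp only [clB, clC, Finset.mem_filter, Finset.mem_univ, true_and]
  tauto

lemma clB_perm2 : clB z0 zm1 z1 = clD z1 z0 zm1 := by
  ext j
  simp only [clB, clD, Finset.mem_filter, Finset.mem_univ, true_and]
  cases h1 : z1 j <;> cases h0 : z0 j <;> cases hm : zm1 j <;> simp

lemma excl110 {k : ℕ} {p : Finset (Fin n) × (Fin n → Bool)} (hp : p ∈ S0 z1 z0 zm1 k)
    (h : qpair z1 z0 zm1 p) : ¬ q111 z1 z0 zm1 p := by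
  obtain ⟨-, ⟨h1, -, -⟩, -⟩ := (mem_S0 z1 z0 zm1).mp hp
  obtain ⟨j, hj, e1, e0, em⟩ := h
  rintro ⟨j', hj', f1, f0, fm⟩
  rw [uniq h1 hj hj' e1 f1] at em
  exact em fm

lemma excl101 {k : ℕ} {p : Finset (Fin n) × (Fin n → Bool)} (hp : p ∈ S0 z1 z0 zm1 k)
    (h : qpair z1 zm1 z0 p) :
    ¬ q111 z1 z0 zm1 p ∧ ¬ qpair z1 z0 zm1 p := by
  obtain ⟨-, ⟨h1, -, -⟩, -⟩ := (mem_S0 z1 z0 zm1).mp hp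
  obtain ⟨j, hj, e1, em, e0⟩ := h
  constructor
  · rintro ⟨j', hj', f1, f0, fm⟩
    rw [uniq h1 hj hj' e1 f1] at e0
    exact e0 f0
  · rintro ⟨j', hj', f1, f0, fm⟩
    rw [uniq h1 hj hj' e1 f1] at e0
    exact e0 f0

lemma excl011 {k : ℕ} {p : Finset (Fin n) × (Fin n → Bool)} (hp : p ∈ S0 z1 z0 zm1 k)
    (h : qpair z0 zm1 z1 p) :
    ¬ q111 z1 z0 zm1 p ∧ ¬ qpair z1 z0 zm1 p ∧ ¬ qpair z1 zm1 z0 p := by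
  obtain ⟨-, ⟨-, h0, hm⟩, -⟩ := (mem_S0 z1 z0 zm1).mp hp
  obtain ⟨j, hj, e0, em, e1⟩ := h
  refine ⟨?_, ?_, ?_⟩
  · rintro ⟨j', hj', f1, f0, fm⟩
    rw [uniq h0 hj hj' e0 f0] at e1
    exact e1 f1
  · rintro ⟨j', hj', f1, f0, fm⟩
    rw [uniq h0 hj hj' e0 f0] at e1
    exact e1 f1
  · rintro ⟨j', hj', f1, fm, f0⟩
    rw [uniq hm hj hj' em fm] at e1
    exact e1 f1

lemma partitionS0 (k : ℕ) :
    (S0 z1 z0 zm1 k).card =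
      ((S0 z1 z0 zm1 k).filter (q111 z1 z0 zm1)).card
      + ((S0 z1 z0 zm1 k).filter (qpair z1 z0 zm1)).card
      + ((S0 z1 z0 zm1 k).filter (qpair z1 zm1 z0)).card
      + ((S0 z1 z0 zm1 k).filter (qpair z0 zm1 z1)).card
      + ((S0 z1 z0 zm1 k).filter (fun p => ¬ q111 z1 z0 zm1 p ∧ ¬ qpair z1 z0 zm1 p ∧
          ¬ qpair z1 zm1 z0 p ∧ ¬ qpair z0 zm1 z1 p)).card := by
  classical
  set S := S0 z1 z0 zm1 k with hS
  have step1 := Finset.card_filter_add_card_filter_not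
    (s := S) (p := q111 z1 z0 zm1)
  have e1 : (S.filter (fun p => ¬ q111 z1 z0 zm1 p)).card =
      (S.filter (qpair z1 z0 zm1)).card +
      (S.filter (fun p => ¬ q111 z1 z0 zm1 p ∧ ¬ qpair z1 z0 zm1 p)).card := by
    have step2 := Finset.card_filter_add_card_filter_not
      (s := S.filter (fun p => ¬ q111 z1 z0 zm1 p)) (p := qpair z1 z0 zm1)
    rw [Finset.filter_filter, Finset.filter_filter] at step2
    rw [← step2]
    congr 2
    apply Finset.filter_congr
    intro p hp
    constructor
    · tauto
    · intro h; exact ⟨excl110 z1 z0 zm1 (hS ▸ hp) h, h⟩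
  have e2 : (S.filter (fun p => ¬ q111 z1 z0 zm1 p ∧ ¬ qpair z1 z0 zm1 p)).card =
      (S.filter (qpair z1 zm1 z0)).card +
      (S.filter (fun p => (¬ q111 z1 z0 zm1 p ∧ ¬ qpair z1 z0 zm1 p) ∧
        ¬ qpair z1 zm1 z0 p)).card := by
    have step3 := Finset.card_filter_add_card_filter_not
      (s := S.filter (fun p => ¬ q111 z1 z0 zm1 p ∧ ¬ qpair z1 z0 zm1 p))
      (p := qpair z1 zm1 z0)
    rw [Finset.filter_filter, Finset.filter_filter] at step3
    rw [← step3]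
    congr 2
    apply Finset.filter_congr
    intro p hp
    constructor
    · tauto
    · intro h
      exact ⟨⟨(excl101 z1 z0 zm1 (hS ▸ hp) h).1, (excl101 z1 z0 zm1 (hS ▸ hp) h).2⟩, h⟩
  have e3 : (S.filter (fun p => (¬ q111 z1 z0 zm1 p ∧ ¬ qpair z1 z0 zm1 p) ∧
        ¬ qpair z1 zm1 z0 p)).card =
      (S.filter (qpair z0 zm1 z1)).card +
      (S.filter (fun p => ¬ q111 z1 z0 zm1 p ∧ ¬ qpair z1 z0 zm1 p ∧
        ¬ qpair z1 zm1 z0 p ∧ ¬ qpair z0 zm1 z1 p)).card := by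
    have step4 := Finset.card_filter_add_card_filter_not
      (s := S.filter (fun p => (¬ q111 z1 z0 zm1 p ∧ ¬ qpair z1 z0 zm1 p) ∧
        ¬ qpair z1 zm1 z0 p))
      (p := qpair z0 zm1 z1)
    rw [Finset.filter_filter, Finset.filter_filter] at step4
    rw [← step4]
    congr 2
    · apply Finset.filter_congr
      intro p hp
      constructor
      · tauto
      · intro h
        obtain ⟨x1, x2, x3⟩ := excl011 z1 z0 zm1 (hS ▸ hp) h
        exact ⟨⟨⟨x1, x2⟩, x3⟩, h⟩
    · apply Finset.filter_congr
      intro p hp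
      tauto
  omega


lemma stepA (k : ℕ) :
    ((Finset.powersetCard k (Finset.univ : Finset (Fin n)) ×ˢ
        (Finset.univ : Finset (Fin n → Bool))).filter (good z1 z0 zm1)).card
    = 2 ^ (n - k) * (S0 z1 z0 zm1 k).card := by
  classical
  unfold S0
  set dom := Finset.powersetCard k (Finset.univ : Finset (Fin n)) ×ˢ
      (Finset.univ : Finset (Fin n → Bool)) with hdom
  set S := dom.filter (good z1 z0 zm1) with hS
  set S₀ := dom.filter (fun p => good z1 z0 zm1 p ∧ ∀ j, j ∉ p.1 → p.2 j = false) with hS₀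
  set f : Finset (Fin n) × (Fin n → Bool) → Finset (Fin n) × (Fin n → Bool) :=
    fun p => (p.1, fun j => if j ∈ p.1 then p.2 j else false) with hf
  have hagree : ∀ p : Finset (Fin n) × (Fin n → Bool), ∀ j ∈ p.1, p.2 j = (f p).2 j := by
    intro p j hj; simp [hf, hj]
  have hmaps : ∀ p ∈ S, f p ∈ S₀ := by
    intro p hp
    rw [hS, Finset.mem_filter] at hp
    rw [hS₀, Finset.mem_filter]
    refine ⟨by simpa [hdom, hf] using hp.1, ?_, ?_⟩
    · have := (good_congr z1 z0 zm1 p.1 p.2 (f p).2 (hagree p)).mp ?_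
      · simpa [hf] using this
      · simpa using hp.2
    · intro j hj; simp [hf] at hj ⊢; simp [hj]
  rw [Finset.card_eq_sum_card_fiberwise hmaps]
  have hfib : ∀ t ∈ S₀, (S.filter (fun p => f p = t)).card = 2 ^ (n - k) := by
    intro t ht
    rw [hS₀, Finset.mem_filter] at ht
    obtain ⟨htdom, htgood, htzero⟩ := ht
    have htL : t.1.card = k := by
      rw [hdom, Finset.mem_product] at htdom
      exact (Finset.mem_powersetCard.mp htdom.1).2
    have : S.filter (fun p => f p = t) =
        {t.1} ×ˢ (Finset.univ.filter (fun ν : Fin n → Bool => ∀ j ∈ t.1, ν j = t.2 j)) := by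
      ext p
      simp only [Finset.mem_filter, Finset.mem_product, Finset.mem_singleton, hS]
      constructor
      · rintro ⟨⟨hpdom, hpgood⟩, hfp⟩
        have h1 : p.1 = t.1 := by rw [← hfp]
        refine ⟨h1, Finset.mem_univ _, ?_⟩
        intro j hj
        have := congrArg (fun q => q.2 j) hfp
        simp only [hf] at this
        rw [h1] at this; simp [hj] at this; exact this
      · rintro ⟨h1, -, h2'⟩
        have hgood : good z1 z0 zm1 p := by
          have := (good_congr z1 z0 zm1 t.1 p.2 t.2 h2').mpr ?_
          · obtain ⟨pa, pb⟩ := p; simp only at h1; subst h1; exact this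
          · simpa using htgood
        refine ⟨⟨?_, hgood⟩, ?_⟩
        · rw [hdom, Finset.mem_product]
          constructor
          · rw [Finset.mem_powersetCard]; exact ⟨Finset.subset_univ _, by rw [h1, htL]⟩
          · exact Finset.mem_univ _
        · have : f p = (p.1, t.2) := by
            simp only [hf, Prod.mk.injEq]
            refine ⟨trivial, ?_⟩
            funext j
            by_cases hj : j ∈ p.1
            · simp [hj]; exact h2' j (h1 ▸ hj)
            · simp [hj]; exact htzero j (h1 ▸ hj)
          rw [this, h1]
    rw [this, Finset.card_product, Finset.card_singleton, one_mul, card_agree, htL]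
  rw [Finset.sum_congr rfl hfib, Finset.sum_const, smul_eq_mul, mul_comm]

end Main

end OIK


set_option maxHeartbeats 1000000

/-- Three-bitstring simultaneous satisfaction probability for 1-in-k SAT: with
`a = n₀₀₀+n₁₁₁`, `b = n₀₀₁+n₁₁₀`, `c = n₀₁₀+n₁₀₁`, `d = n₀₁₁+n₁₀₀`, the probability that
three fixed strings all satisfy a random clause (scope of `k` distinct variables, uniform
negations) is `(1/(2^k C(n,k)))·[k·C(a,k) + 2·C(a,k−2)(C(b,2)+C(c,2)+C(d,2)) + b·c·d·C(a,k−3)]`. -/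
theorem one_in_k_sat_three_string_satisfaction_probability (n k : ℕ) (hk : 3 ≤ k)
    (hkn : k ≤ n) (z1 z0 zm1 : Fin n → Bool)
    (ncfg : Bool × Bool × Bool → ℕ)
    (hcfg : ∀ s, ncfg s =
      (Finset.univ.filter (fun j : Fin n => (z1 j, z0 j, zm1 j) = s)).card)
    (a b c d : ℕ)
    (ha : a = ncfg (false, false, false) + ncfg (true, true, true))
    (hb : b = ncfg (false, false, true) + ncfg (true, true, false))
    (hc : c = ncfg (false, true, false) + ncfg (true, false, true))
    (hd : d = ncfg (false, true, true) + ncfg (true, false, false)) :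
    (((((Finset.powersetCard k (Finset.univ : Finset (Fin n))) ×ˢ
          (Finset.univ : Finset (Fin n → Bool))).filter
        (fun p => oneInKSatisfies z1 p.1 p.2 ∧ oneInKSatisfies z0 p.1 p.2 ∧
          oneInKSatisfies zm1 p.1 p.2)).card : ℚ))
      / ((Nat.choose n k : ℚ) * 2 ^ n)
    = (1 / (2 ^ k * (Nat.choose n k : ℚ))) *
        ((k : ℚ) * (Nat.choose a k : ℚ) +
          2 * (Nat.choose a (k - 2) : ℚ) *
            ((Nat.choose b 2 : ℚ) + (Nat.choose c 2 : ℚ) + (Nat.choose d 2 : ℚ)) +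
          (b : ℚ) * (c : ℚ) * (d : ℚ) * (Nat.choose a (k - 3) : ℚ)) := by
  classical
  have hdisjcfg : ∀ s1 s2 : Bool × Bool × Bool, s1 ≠ s2 →
      Disjoint (Finset.univ.filter (fun j : Fin n => (z1 j, z0 j, zm1 j) = s1))
        (Finset.univ.filter (fun j : Fin n => (z1 j, z0 j, zm1 j) = s2)) := by
    intro s1 s2 hne
    rw [Finset.disjoint_left]
    intro j hj1 hj2
    simp only [Finset.mem_filter, Finset.mem_univ, true_and] at hj1 hj2
    exact hne (hj1 ▸ hj2)
  have hA : (OIK.clA z1 z0 zm1).card = a := by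
    rw [ha, hcfg, hcfg, ← Finset.card_union_of_disjoint (hdisjcfg _ _ (by simp)),
      ← Finset.filter_or]
    congr 1
    ext j
    cases h1 : z1 j <;> cases h0 : z0 j <;> cases hm : zm1 j <;>
      simp [OIK.clA, h1, h0, hm, Prod.ext_iff]
  have hB : (OIK.clB z1 z0 zm1).card = b := by
    rw [hb, hcfg, hcfg, ← Finset.card_union_of_disjoint (hdisjcfg _ _ (by simp)),
      ← Finset.filter_or]
    congr 1
    ext j
    cases h1 : z1 j <;> cases h0 : z0 j <;> cases hm : zm1 j <;>
      simp [OIK.clB, h1, h0, hm, Prod.ext_iff]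
  have hC : (OIK.clC z1 z0 zm1).card = c := by
    rw [hc, hcfg, hcfg, ← Finset.card_union_of_disjoint (hdisjcfg _ _ (by simp)),
      ← Finset.filter_or]
    congr 1
    ext j
    cases h1 : z1 j <;> cases h0 : z0 j <;> cases hm : zm1 j <;>
      simp [OIK.clC, h1, h0, hm, Prod.ext_iff]
  have hD : (OIK.clD z1 z0 zm1).card = d := by
    rw [hd, hcfg, hcfg, ← Finset.card_union_of_disjoint (hdisjcfg _ _ (by simp)),
      ← Finset.filter_or]
    congr 1
    ext j
    cases h1 : z1 j <;> cases h0 : z0 j <;> cases hm : zm1 j <;>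
      simp [OIK.clD, h1, h0, hm, Prod.ext_iff]
  have hfe : (((Finset.powersetCard k (Finset.univ : Finset (Fin n))) ×ˢ
          (Finset.univ : Finset (Fin n → Bool))).filter
        (fun p => oneInKSatisfies z1 p.1 p.2 ∧ oneInKSatisfies z0 p.1 p.2 ∧
          oneInKSatisfies zm1 p.1 p.2))
      = (((Finset.powersetCard k (Finset.univ : Finset (Fin n))) ×ˢ
          (Finset.univ : Finset (Fin n → Bool))).filter (OIK.good z1 z0 zm1)) := by
    apply Finset.filter_congr
    intro p _
    exact Iff.rfl
  have h111 := OIK.case111 z1 z0 zm1 k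
  have hp1 := OIK.casePair z1 z0 zm1 k (by omega)
  have hp2 := OIK.casePair z1 zm1 z0 k (by omega)
  rw [← OIK.S0_perm1, OIK.clA_perm1, OIK.clB_perm1] at hp2
  have hp3 := OIK.casePair z0 zm1 z1 k (by omega)
  rw [← OIK.S0_perm2, OIK.clA_perm2, OIK.clB_perm2] at hp3
  have hrest := OIK.caseRest z1 z0 zm1 k hk
  have hpart := OIK.partitionS0 z1 z0 zm1 k
  rw [h111, hp1, hp2, hp3, hrest, hA, hB, hC, hD,
    ← OIK.two_mul_choose_two b, ← OIK.two_mul_choose_two c, ← OIK.two_mul_choose_two d]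
    at hpart
  have hSA := OIK.stepA z1 z0 zm1 k
  rw [hfe, hSA, hpart]
  have hn2 : (2:ℚ) ^ n = 2 ^ k * 2 ^ (n - k) := by
    rw [← pow_add]
    congr 1
    omega
  have hc0 : (Nat.choose n k : ℚ) ≠ 0 := Nat.cast_ne_zero.mpr (Nat.choose_pos hkn).ne'
  have h2k : (2:ℚ) ^ k ≠ 0 := by positivity
  have h2nk : (2:ℚ) ^ (n - k) ≠ 0 := by positivity
  rw [hn2]
  push_cast
  field_simp
  ring
end

section
/- Let f: {0,...,k}^3 → ℂ, let (z^1, z^0, z^{-1}) be n-bit strings with configuration basis numbers (n_s)_{s∈{0,1}^3}, and let a random clause σ be given by k i.i.d. uniform variable indices in [n] and k i.i.d. uniform negation bits. Then E_σ[f(Σ_{(l,ν)∈σ} z^1_l ⊕ ν, Σ_{(l,ν)∈σ} z^0_l ⊕ ν, Σ_{(l,ν)∈σ} z^{-1}_l ⊕ ν)] = 2^{−k} Σ over weight-k configurations (k_s) of (k!/∏_s k_s!)(∏_s ((n_s+n_{s̄})/n)^{k_s}) · f(h^1, h^0, h^{-1}), where h^t = Σ_{s: s^t = 1} k_s and s̄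 denotes the bitwise complement of s. -/
/-! A clause is a word of `k` literals `(l, ν) ∈ [n] × {0,1}`, and the three Hamming weights only
depend on the colour `(z¹_l ⊕ ν, z⁰_l ⊕ ν, z⁻¹_l ⊕ ν) ∈ {0,1}³` of each literal, in fact only on
how many literals of each colour `s` occur (`h^t` counts those with `s^t = 1`). Exactly
`n_s + n_{s̄}` literals have colour `s`, so grouping the `(2n)^k` clauses by their colour counts
`(k_s)` is the multinomial theorem for `(∑_s (n_s + n_{s̄}))^k`. -/

open Finset

def fiberCard {ι β : Type*} [Fintype ι] [DecidableEq β] (c : ι → β) (s : β) : ℕ :=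
  #{i | c i = s}

theorem card_filter_comp_eq_sum_fiberCard {ι β : Type*} [Fintype ι] [Fintype β] [DecidableEq β]
    (c : ι → β) (p : β → Prop) [DecidablePred p] :
    #{i | p (c i)} = ∑ s with p s, fiberCard c s := by
  rw [card_eq_sum_card_fiberwise (f := c) (t := {s | p s}) (fun i hi => by simp_all)]
  refine sum_congr rfl fun s hs => congrArg card ?_
  ext i
  simp only [mem_filter, mem_univ, true_and] at hs ⊢
  exact ⟨And.right, fun h => ⟨h ▸ hs, h⟩⟩

/- In the monoid algebra `R[β → ℕ]` the exponent of a monomial records fibre cardinalities: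
expanding `(∑ y, x y) ^ k` word by word gives the left side, the multinomial theorem the right
side, and `L` reads off `F` at the exponent. -/
open AddMonoidAlgebra in
theorem sum_prod_mul_fiberCard_eq_sum_piAntidiag {R β γ : Type*} [CommSemiring R] [Fintype β]
    [DecidableEq β] [Fintype γ] (k : ℕ) (col : γ → β) (w : γ → R) (F : (β → ℕ) → R) :
    ∑ g : Fin k → γ, (∏ m, w (g m)) * F (fiberCard (col ∘ g)) =
      ∑ ks ∈ piAntidiag univ k,
        Nat.multinomial univ ks * (∏ s, (∑ y with col y = s, w y) ^ ks s) * F ks := by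
  let L : R[β → ℕ] →+ R := (Finsupp.liftAddHom fun ks => AddMonoidHom.mulRight (F ks)).comp
    coeffAddEquiv.toAddMonoidHom
  have hL (ks : β → ℕ) (r : R) : L (single ks r) = r * F ks := by
    simp [L, coeff_single]
  let x (y : γ) : R[β → ℕ] := single (Pi.single (col y) 1) (w y)
  have hfiber (g : Fin k → γ) : ∑ m, Pi.single (col (g m)) 1 = fiberCard (col ∘ g) := by
    ext s
    simp [Finset.sum_apply, Pi.single_apply, fiberCard, eq_comm]
  have hexpand :
      (∑ y, x y) ^ k = ∑ g : Fin k → γ, single (fiberCard (col ∘ g)) (∏ m, w (g m)) := by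
    rw [← Fin.prod_const, Fintype.prod_sum]
    simp only [x, prod_single, hfiber]
  have hcollect : ∑ y, x y = ∑ s, single (Pi.single s 1) (∑ y with col y = s, w y) := by
    rw [← sum_fiberwise univ col x]
    refine sum_congr rfl fun s _ => ?_
    rw [← singleAddHom_apply, map_sum]
    exact sum_congr rfl fun y hy => by simp only [x, (mem_filter.1 hy).2, singleAddHom_apply]
  have hmonomial (ks : β → ℕ) (a : β → R) :
      (Nat.multinomial univ ks : R[β → ℕ]) * ∏ s, single (Pi.single s 1) (a s) ^ ks s =
        single ks (Nat.multinomial univ ks * ∏ s, a s ^ ks s) := by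
    simp only [single_pow, prod_single, ← nsmul_eq_mul, smul_single, ← Pi.single_smul,
      smul_eq_mul, mul_one, univ_sum_single]
  have := congrArg L (hexpand.symm.trans (by rw [hcollect, sum_pow_eq_sum_piAntidiag]))
  simpa only [map_sum, hmonomial, hL] using this

theorem card_filter_cond_eq_add {α β : Type*} [Fintype α] [DecidableEq β] {e : β → β}
    (he : Function.Involutive e) (z : α → β) (s : β) :
    #{x : α × Bool | cond x.2 (e (z x.1)) (z x.1) = s} = #{l | z l = s} + #{l | z l = e s} := by
  simp only [card_filter, Fintype.sum_prod_type, Fintype.sum_bool, cond_true, cond_false,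
    he.eq_iff, ← sum_add_distrib, add_comm]

theorem average_hamming_weight_function_over_random_clause_general
    (n k : ℕ) (f : ℕ → ℕ → ℕ → ℂ)
    (z1 z0 zm1 : Fin n → Bool)
    (ncfg : Bool × Bool × Bool → ℕ)
    (hcfg : ∀ s, ncfg s =
      (Finset.univ.filter (fun j : Fin n => (z1 j, z0 j, zm1 j) = s)).card) :
    (((n : ℂ) ^ k * 2 ^ k)⁻¹) *
      ∑ σ : (Fin k → Fin n) × (Fin k → Bool),
        f ((Finset.univ.filter (fun m : Fin k => xor (z1 (σ.1 m)) (σ.2 m) = true)).card)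
          ((Finset.univ.filter (fun m : Fin k => xor (z0 (σ.1 m)) (σ.2 m) = true)).card)
          ((Finset.univ.filter (fun m : Fin k => xor (zm1 (σ.1 m)) (σ.2 m) = true)).card)
    = ((2 : ℂ) ^ k)⁻¹ *
        ∑ ks ∈ Finset.piAntidiag (Finset.univ : Finset (Bool × Bool × Bool)) k,
          (Nat.multinomial Finset.univ ks : ℂ) *
            (∏ s : Bool × Bool × Bool,
              (((ncfg s + ncfg (!s.1, !s.2.1, !s.2.2) : ℕ) : ℂ) / n) ^ ks s) *
            f (∑ s ∈ Finset.univ.filter (fun s : Bool × Bool × Bool => s.1 = true), ks s)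
              (∑ s ∈ Finset.univ.filter (fun s : Bool × Bool × Bool => s.2.1 = true), ks s)
              (∑ s ∈ Finset.univ.filter (fun s : Bool × Bool × Bool => s.2.2 = true), ks s) := by
  let zt : Fin n → Bool × Bool × Bool := fun j => (z1 j, z0 j, zm1 j)
  let colour : Fin n × Bool → Bool × Bool × Bool := fun x => cond x.2 (zt x.1)ᶜ (zt x.1)
  let F : (Bool × Bool × Bool → ℕ) → ℂ := fun ks =>
    f (∑ s with s.1 = true, ks s) (∑ s with s.2.1 = true, ks s) (∑ s with s.2.2 = true, ks s)
  have hcolour (x : Fin n × Bool) :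
      colour x = (xor (z1 x.1) x.2, xor (z0 x.1) x.2, xor (zm1 x.1) x.2) := by
    rcases x with ⟨j, _ | _⟩ <;> simp [colour, zt, Prod.ext_iff]
  have hclauses : ∑ σ : (Fin k → Fin n) × (Fin k → Bool),
        f #{m | xor (z1 (σ.1 m)) (σ.2 m) = true} #{m | xor (z0 (σ.1 m)) (σ.2 m) = true}
          #{m | xor (zm1 (σ.1 m)) (σ.2 m) = true} =
      ∑ g : Fin k → Fin n × Bool, F (fiberCard (colour ∘ g)) := by
    refine (Fintype.sum_equiv (Equiv.arrowProdEquivProdArrow _ _ _) _ _ fun g => ?_).symm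
    simp only [F, ← card_filter_comp_eq_sum_fiberCard, Function.comp_apply, hcolour]
    rfl
  have hfibre (s : Bool × Bool × Bool) :
      ∑ y with colour y = s, (1 : ℂ) = ((ncfg s + ncfg (!s.1, !s.2.1, !s.2.2) : ℕ) : ℂ) := by
    rw [sum_const, nsmul_one, card_filter_cond_eq_add compl_involutive, hcfg, hcfg]
    rfl
  have hmultinomial := sum_prod_mul_fiberCard_eq_sum_piAntidiag k colour (fun _ => (1 : ℂ)) F
  simp only [prod_const_one, one_mul, hfibre] at hmultinomial
  rw [hclauses, hmultinomial, mul_sum, mul_sum]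
  refine sum_congr rfl fun ks hks => ?_
  have hdiv (a : Bool × Bool × Bool → ℂ) : ∏ s, (a s / n) ^ ks s = (∏ s, a s ^ ks s) / n ^ k := by
    simp only [div_pow, prod_div_distrib, prod_pow_eq_pow_sum, (mem_piAntidiag.1 hks).1]
  rw [hdiv]
  ring

/-- Averaging a function of the Hamming weights of the negated restrictions of three
bitstrings over a random clause (`k` i.i.d. uniform variable indices with replacement,
`k` i.i.d. uniform negations):
`E_σ f(|z¹_σ|, |z⁰_σ|, |z⁻¹_σ|) = 2^{−k} Σ_{k ∈ P(k)} (k!/∏ k_s!) ∏_s ((n_s+n_{s̄})/n)^{k_s}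
  · f(h¹, h⁰, h⁻¹)` with `h^t = Σ_{s : s^t = 1} k_s`. -/
theorem average_hamming_weight_function_over_random_clause
    (n k : ℕ) (hn : 1 ≤ n) (f : ℕ → ℕ → ℕ → ℂ)
    (z1 z0 zm1 : Fin n → Bool)
    (ncfg : Bool × Bool × Bool → ℕ)
    (hcfg : ∀ s, ncfg s =
      (Finset.univ.filter (fun j : Fin n => (z1 j, z0 j, zm1 j) = s)).card) :
    (((n : ℂ) ^ k * 2 ^ k)⁻¹) *
      ∑ σ : (Fin k → Fin n) × (Fin k → Bool),
        f ((Finset.univ.filter (fun m : Fin k => xor (z1 (σ.1 m)) (σ.2 m) = true)).card)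
          ((Finset.univ.filter (fun m : Fin k => xor (z0 (σ.1 m)) (σ.2 m) = true)).card)
          ((Finset.univ.filter (fun m : Fin k => xor (zm1 (σ.1 m)) (σ.2 m) = true)).card)
    = ((2 : ℂ) ^ k)⁻¹ *
        ∑ ks ∈ Finset.piAntidiag (Finset.univ : Finset (Bool × Bool × Bool)) k,
          (Nat.multinomial Finset.univ ks : ℂ) *
            (∏ s : Bool × Bool × Bool,
              (((ncfg s + ncfg (!s.1, !s.2.1, !s.2.2) : ℕ) : ℂ) / n) ^ ks s) *
            f (∑ s ∈ Finset.univ.filter (fun s : Bool × Bool × Bool => s.1 = true), ks s)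
              (∑ s ∈ Finset.univ.filter (fun s : Bool × Bool × Bool => s.2.1 = true), ks s)
              (∑ s ∈ Finset.univ.filter (fun s : Bool × Bool × Bool => s.2.2 = true), ks s) :=
  average_hamming_weight_function_over_random_clause_general n k f z1 z0 zm1 ncfg hcfg
end
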